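/- arXiv:0904.1393 — 8 statements merged into one kernel-verified Lean document; each statement's English description precedes it below -/
import Mathlib

section
/- Let x : [t₀,∞) → ℝ (t₀ ≥ 1) be a C¹ function and define u(t) = t·x′(t) − x(t). If u is bounded on [t₀,∞), then there exists x₁ ∈ ℝ such that x(t)/t → x₁ and x′(t) → x₁ as t → +∞; in other words x(t) = x₁t + o(t) and x′(t) = x₁ + o(1) when t → +∞. -/
open Filter Set Topology

/-!
Put `v = x / t`. Then `v' = u / t²`, so `|v'| ≤ U / t²`, and comparison with `U / t` makes `v`
Cauchy at infinity: `|v t - v s| ≤ U / s - U / t`. Its limit is `x₁`, and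
`x' = v + u / t` tends to `x₁` as well because `u` is bounded.
-/

section DerivBoundedByInvSq

variable {a C : ℝ} {f f' : ℝ → ℝ}

theorem abs_sub_le_of_abs_deriv_le_div_sq (ha : 0 < a)
    (hf : ∀ t ∈ Ici a, HasDerivAt f (f' t) t) (hbound : ∀ t ∈ Ici a, |f' t| ≤ C / t ^ 2)
    {s t : ℝ} (hs : a ≤ s) (hst : s ≤ t) : |f t - f s| ≤ C / s - C / t := by
  have hIcc : Icc s t ⊆ Ici a := fun r hr => hs.trans hr.1
  have hboundary : ∀ r ∈ Icc s t, HasDerivAt (fun r => C / s - C / r) (C / r ^ 2) r := by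
    intro r hr
    simpa [div_eq_mul_inv] using
      ((hasDerivAt_inv (ha.trans_le (hIcc hr)).ne').const_mul C).const_sub (C / s)
  exact image_norm_le_of_norm_deriv_right_le_deriv_boundary' (f := fun r => f r - f s)
    (fun r hr => ((hf r (hIcc hr)).continuousAt.sub continuousAt_const).continuousWithinAt)
    (fun r hr => ((hf r (hIcc (Ico_subset_Icc_self hr))).sub_const _).hasDerivWithinAt)
    (by simp) (fun r hr => (hboundary r hr).continuousAt.continuousWithinAt)
    (fun r hr => (hboundary r (Ico_subset_Icc_self hr)).hasDerivWithinAt)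
    (fun r hr => hbound r (hIcc (Ico_subset_Icc_self hr))) ⟨hst, le_rfl⟩

theorem exists_tendsto_of_abs_deriv_le_div_sq (ha : 0 < a)
    (hf : ∀ t ∈ Ici a, HasDerivAt f (f' t) t) (hbound : ∀ t ∈ Ici a, |f' t| ≤ C / t ^ 2) :
    ∃ l, Tendsto f atTop (𝓝 l) := by
  have hC : 0 ≤ C := by
    simpa using (le_div_iff₀ (by positivity)).mp ((abs_nonneg _).trans (hbound a self_mem_Ici))
  refine cauchySeq_tendsto_of_complete (Metric.cauchySeq_iff'.2 fun ε hε => ?_)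
  obtain ⟨N, hN, hNε⟩ := ((eventually_ge_atTop a).and
    ((tendsto_const_nhds.div_atTop tendsto_id).eventually (gt_mem_nhds hε))).exists
  refine ⟨N, fun n hn => ?_⟩
  calc dist (f n) (f N) ≤ C / N - C / n := abs_sub_le_of_abs_deriv_le_div_sq ha hf hbound hN hn
    _ ≤ C / N := sub_le_self _ (div_nonneg hC ((ha.le.trans hN).trans hn))
    _ < ε := hNε

end DerivBoundedByInvSq

theorem asymptotically_linear_slope_of_u_bounded_general
    (t₀ : ℝ) (ht₀ : 1 ≤ t₀) (x x' : ℝ → ℝ)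
    (hx : ∀ t ∈ Set.Ici t₀, HasDerivAt x (x' t) t)
    (U : ℝ) (hU : ∀ t ∈ Set.Ici t₀, |t * x' t - x t| ≤ U) :
    ∃ x₁ : ℝ,
      Tendsto (fun t => x t / t) atTop (nhds x₁) ∧
      Tendsto x' atTop (nhds x₁) := by
  have hpos : ∀ t ∈ Ici t₀, 0 < t := fun t ht => zero_lt_one.trans_le (ht₀.trans ht)
  have hv : ∀ t ∈ Ici t₀, HasDerivAt (fun t => x t / t) ((t * x' t - x t) / t ^ 2) t :=
    fun t ht => by simpa [mul_comm] using (hx t ht).fun_div (hasDerivAt_id' t) (hpos t ht).ne'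
  have hv_bound : ∀ t ∈ Ici t₀, |(t * x' t - x t) / t ^ 2| ≤ U / t ^ 2 := fun t ht => by
    rw [abs_div, abs_of_pos (pow_pos (hpos t ht) 2)]
    exact div_le_div_of_nonneg_right (hU t ht) (sq_nonneg t)
  obtain ⟨x₁, hx₁⟩ := exists_tendsto_of_abs_deriv_le_div_sq (zero_lt_one.trans_le ht₀) hv hv_bound
  have hu_div : Tendsto (fun t => t⁻¹ * (t * x' t - x t)) atTop (𝓝 0) :=
    tendsto_inv_atTop_zero.zero_mul_isBoundedUnder_le <| isBoundedUnder_of_eventually_le <|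
      (eventually_ge_atTop t₀).mono hU
  have hderiv_lim := hx₁.add hu_div
  rw [add_zero] at hderiv_lim
  refine ⟨x₁, hx₁, hderiv_lim.congr' ?_⟩
  filter_upwards [eventually_ge_atTop t₀] with t ht
  field_simp [(hpos t ht).ne']
  ring

/-- Lemma 1 (i): if `u(t) = t·x′(t) − x(t)` is bounded on `[t₀, ∞)` (with `t₀ ≥ 1`),
then there is `x₁ ∈ ℝ` with `x(t)/t → x₁` and `x′(t) → x₁` as `t → +∞`. -/
theorem asymptotically_linear_slope_of_u_bounded
    (t₀ : ℝ) (ht₀ : 1 ≤ t₀) (x x' : ℝ → ℝ)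
    (hx : ∀ t ∈ Set.Ici t₀, HasDerivAt x (x' t) t)
    (hx' : ContinuousOn x' (Set.Ici t₀))
    (U : ℝ) (hU : ∀ t ∈ Set.Ici t₀, |t * x' t - x t| ≤ U) :
    ∃ x₁ : ℝ,
      Tendsto (fun t => x t / t) atTop (nhds x₁) ∧
      Tendsto x' atTop (nhds x₁) :=
  asymptotically_linear_slope_of_u_bounded_general t₀ ht₀ x x' hx U hU
end

section
/- Let x : [t₀,∞) → ℝ (t₀ ≥ 1) be a C¹ function and define u(t) = t·x′(t) − x(t). If u(t) converges to a finite limit u∞ ∈ ℝ as t → +∞, then there exist x₁, x₂ ∈ ℝ with x₂ = −u∞ such that x(t) = x₁t + x₂ + o(1) and x′(t) = x₁ + o(t⁻¹) as t → +∞; i.e. x is asymptotically linear. -/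
/-!
Set `h t = (x t + u∞) / t`. Its derivative `(u t - u∞) / t²` is `o(t⁻²)`, which integrates to
`h t = x₁ + o(t⁻¹)`. Multiplying by `t` gives `x t = x₁ t - u∞ + o(1)`, and
`x' t = (u t + x t) / t = x₁ + o(t⁻¹)`.
-/

open Filter Set Asymptotics

section

variable {E : Type*} [NormedAddCommGroup E] [NormedSpace ℝ E] {f f' : ℝ → E}

theorem norm_sub_le_of_norm_deriv_le_div_sq {a b ε : ℝ} (ha : 0 < a) (hab : a ≤ b)
    (hf : ∀ t ∈ Icc a b, HasDerivAt f (f' t) t) (hf' : ∀ t ∈ Icc a b, ‖f' t‖ ≤ ε / t ^ 2) :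
    ‖f b - f a‖ ≤ ε * (a⁻¹ - b⁻¹) := by
  have hB : ∀ t ∈ Icc a b, HasDerivAt (fun s => ε * (a⁻¹ - s⁻¹)) (ε / t ^ 2) t := fun t ht => by
    have := ((hasDerivAt_inv (ha.trans_le ht.1).ne').const_sub a⁻¹).const_mul ε
    rwa [neg_neg, ← div_eq_mul_inv] at this
  refine image_norm_le_of_norm_deriv_right_le_deriv_boundary' (f := fun t => f t - f a)
    (fun t ht => ((hf t ht).continuousAt.sub continuousAt_const).continuousWithinAt)
    (fun t ht => ((hf t (Ico_subset_Icc_self ht)).sub_const (f a)).hasDerivWithinAt)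
    (by simp) (fun t ht => (hB t ht).continuousAt.continuousWithinAt)
    (fun t ht => (hB t (Ico_subset_Icc_self ht)).hasDerivWithinAt)
    (fun t ht => hf' t (Ico_subset_Icc_self ht)) (right_mem_Icc.2 hab)

theorem eventually_norm_sub_le_of_deriv_isLittleO_inv_sq
    (hf : ∀ᶠ t in atTop, HasDerivAt f (f' t) t) (hf' : f' =o[atTop] fun t => (t ^ 2)⁻¹)
    {ε : ℝ} (hε : 0 < ε) : ∀ᶠ s in atTop, ∀ t, s ≤ t → ‖f t - f s‖ ≤ ε * s⁻¹ := by
  have hbound : ∀ᶠ t in atTop, 0 < t ∧ HasDerivAt f (f' t) t ∧ ‖f' t‖ ≤ ε / t ^ 2 := by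
    filter_upwards [eventually_gt_atTop 0, hf, hf'.bound hε] with t ht hderiv hle
    refine ⟨ht, hderiv, hle.trans_eq ?_⟩
    rw [norm_inv, norm_pow, Real.norm_of_nonneg ht.le, div_eq_mul_inv]
  filter_upwards [eventually_forall_ge_atTop.2 hbound] with s hs t hst
  have hsub := norm_sub_le_of_norm_deriv_le_div_sq (hs s le_rfl).1 hst
    (fun r hr => (hs r hr.1).2.1) (fun r hr => (hs r hr.1).2.2)
  have ht : 0 ≤ t⁻¹ := inv_nonneg.2 ((hs s le_rfl).1.le.trans hst)
  exact hsub.trans (mul_le_mul_of_nonneg_left (sub_le_self _ ht) hε.le)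

theorem exists_sub_isLittleO_inv_of_deriv_isLittleO_inv_sq [CompleteSpace E]
    (hf : ∀ᶠ t in atTop, HasDerivAt f (f' t) t) (hf' : f' =o[atTop] fun t => (t ^ 2)⁻¹) :
    ∃ L, (fun t => f t - L) =o[atTop] fun t => t⁻¹ := by
  have hcauchy : CauchySeq f := by
    refine Metric.cauchySeq_iff'.2 fun ε hε => ?_
    obtain ⟨s, hs1, hs⟩ := ((eventually_ge_atTop 1).and
      (eventually_norm_sub_le_of_deriv_isLittleO_inv_sq hf hf' (half_pos hε))).exists
    refine ⟨s, fun t hst => ?_⟩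
    rw [dist_eq_norm]
    calc ‖f t - f s‖ ≤ ε / 2 * s⁻¹ := hs t hst
      _ ≤ ε / 2 := mul_le_of_le_one_right (half_pos hε).le (inv_le_one_of_one_le₀ hs1)
      _ < ε := half_lt_self hε
  obtain ⟨L, hL⟩ := cauchySeq_tendsto_of_complete hcauchy
  refine ⟨L, IsLittleO.of_bound fun ε hε => ?_⟩
  filter_upwards [eventually_gt_atTop 0,
    eventually_norm_sub_le_of_deriv_isLittleO_inv_sq hf hf' hε] with s hs0 hs
  rw [norm_sub_rev, Real.norm_of_nonneg (inv_nonneg.2 hs0.le)]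
  exact le_of_tendsto ((hL.sub_const (f s)).norm) (eventually_atTop.2 ⟨s, hs⟩)

end

theorem asymptotically_linear_of_u_tendsto_general
    (t₀ : ℝ) (x x' : ℝ → ℝ)
    (hx : ∀ t ∈ Set.Ici t₀, HasDerivAt x (x' t) t)
    (uinf : ℝ)
    (hu : Tendsto (fun t => t * x' t - x t) atTop (nhds uinf)) :
    ∃ x₁ x₂ : ℝ, x₂ = -uinf ∧
      Tendsto (fun t => x t - (x₁ * t + x₂)) atTop (nhds 0) ∧
      (fun t => x' t - x₁) =o[atTop] (fun t => t⁻¹) := by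
  have hu₀ : (fun t => t * x' t - x t - uinf) =o[atTop] fun _ => (1 : ℝ) :=
    (isLittleO_one_iff ℝ).2 (tendsto_sub_nhds_zero_iff.2 hu)
  have hderiv : ∀ᶠ t in atTop,
      HasDerivAt (fun s => (x s + uinf) / s) ((t * x' t - x t - uinf) / t ^ 2) t := by
    filter_upwards [eventually_ge_atTop t₀, eventually_ne_atTop 0] with t ht ht0
    exact (((hx t ht).add_const uinf).div (hasDerivAt_id' t) ht0).congr_deriv (by ring)
  obtain ⟨x₁, hx₁⟩ := exists_sub_isLittleO_inv_of_deriv_isLittleO_inv_sq hderiv <| by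
    simpa only [one_mul, div_eq_mul_inv] using
      hu₀.mul_isBigO (isBigO_refl (fun t => (t ^ 2)⁻¹) atTop)
  refine ⟨x₁, -uinf, rfl, hx₁.tendsto_div_nhds_zero.congr' ?_, ?_⟩
  · filter_upwards [eventually_ne_atTop 0] with t ht
    field_simp
    ring
  · have hu₁ : (fun t => (t * x' t - x t - uinf) * t⁻¹) =o[atTop] fun t => t⁻¹ := by
      simpa only [one_mul] using hu₀.mul_isBigO (isBigO_refl (fun t => t⁻¹) atTop)
    refine (hu₁.add hx₁).congr' ?_ EventuallyEq.rfl
    filter_upwards [eventually_ne_atTop 0] with t ht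
    field_simp
    ring

/-- Lemma 1 (ii): if `u(t) = t·x′(t) − x(t)` converges to a finite limit `u∞` as `t → +∞`,
then `x` is asymptotically linear: there are `x₁, x₂ ∈ ℝ` with `x₂ = −u∞` such that
`x(t) = x₁t + x₂ + o(1)` and `x′(t) = x₁ + o(t⁻¹)` as `t → +∞`. -/
theorem asymptotically_linear_of_u_tendsto
    (t₀ : ℝ) (ht₀ : 1 ≤ t₀) (x x' : ℝ → ℝ)
    (hx : ∀ t ∈ Set.Ici t₀, HasDerivAt x (x' t) t)
    (hx' : ContinuousOn x' (Set.Ici t₀))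
    (uinf : ℝ)
    (hu : Tendsto (fun t => t * x' t - x t) atTop (nhds uinf)) :
    ∃ x₁ x₂ : ℝ, x₂ = -uinf ∧
      Tendsto (fun t => x t - (x₁ * t + x₂)) atTop (nhds 0) ∧
      (fun t => x' t - x₁) =o[atTop] (fun t => t⁻¹) :=
  asymptotically_linear_of_u_tendsto_general t₀ x x' hx uinf hu
end

section
/- Let n ≥ 1 be an integer and consider the Emden–Fowler type equation x″ + A(t)x^{2n−1} = 0 for t ≥ t₀ ≥ 1, where A : [t₀,∞) → ℝ is C¹ with A(t) ≥ 0 and (2n+2)A(t) + t·A′(t) ≤ 0 for all t ≥ t₀. Then every solution x of the equation is defined on [t₀,∞) and satisfies either x(t) = o(t) as t → +∞, or x(t) = x₁t + x₂ + o(1) with x₁ ≠ 0 as t → +∞. -/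
/-!
The energy `n x'² + A x^{2n}` is nonincreasing because `A' ≤ 0`, so `x'` stays bounded along a
solution. At a finite endpoint `(x, x')` therefore has a limit, from which Picard–Lindelöf
continues the solution; so a maximal solution lives on `[t₀, ∞)`. There `|x|` grows at most
linearly, while `(2n+2) A + t A' ≤ 0` says that `A t^{2n+2}` is nonincreasing, so
`|x''| = A |x|^{2n-1} = O(t⁻³)`. Integrating twice, `x' → x₁` with `x' - x₁ = O(t⁻²)`, and then
`x - x₁ t → x₂`; if `x₁ = 0` this gives `x = o(t)`.
-/

open Filter Set Asymptotics MeasureTheory Metric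
open scoped Topology NNReal

section ODE

variable {E : Type*} [NormedAddCommGroup E] [NormedSpace ℝ E]

theorem hasDerivAt_ite_lt_of_tendsto {f : ℝ → E → E} {α β : ℝ → E} {t₀ T ε : ℝ} {p : E}
    (hT : t₀ < T) (hα : ∀ t ∈ Ico t₀ T, HasDerivAt α (f t (α t)) t) (hαT : Tendsto α (𝓝[<] T) (𝓝 p))
    (hβ : ∀ t ∈ Icc T (T + ε), HasDerivWithinAt β (f t (β t)) (Icc T (T + ε)) t) (hβT : β T = p)
    (hf : ContinuousAt (Function.uncurry f) (T, p)) :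
    ∀ t ∈ Ico t₀ (T + ε), HasDerivAt (fun s => if s < T then α s else β s)
      (f t (if t < T then α t else β t)) t := by
  set γ : ℝ → E := fun s => if s < T then α s else β s
  have hγα : EqOn γ α (Iio T) := fun s hs => if_pos hs
  have hγβ : EqOn γ β (Ici T) := fun s hs => if_neg (not_lt.2 hs)
  intro t ht
  rcases lt_trichotomy t T with htT | rfl | htT
  · rw [if_pos htT]
    exact (hα t ⟨ht.1, htT⟩).congr_of_eventuallyEq (eventuallyEq_of_mem (Iio_mem_nhds htT) hγα)
  · rw [if_neg (lt_irrefl t), hβT]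
    have hα' : ∀ s ∈ Ioo t₀ t, HasDerivAt γ (f s (α s)) s := fun s hs =>
      (hα s ⟨hs.1.le, hs.2⟩).congr_of_eventuallyEq (eventuallyEq_of_mem (Iio_mem_nhds hs.2) hγα)
    have hleft : HasDerivWithinAt γ (f t p) (Iic t) t := by
      refine hasDerivWithinAt_Iic_of_tendsto_deriv
        (fun s hs => (hα' s hs).differentiableAt.differentiableWithinAt) ?_
        (Ioo_mem_nhdsLT hT) ?_
      · rw [ContinuousWithinAt, show γ t = p from (hγβ self_mem_Ici).trans hβT]
        exact (hαT.mono_left (nhdsWithin_mono _ Ioo_subset_Iio_self)).congr'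
          (eventuallyEq_of_mem self_mem_nhdsWithin fun s hs => (hγα (Ioo_subset_Iio_self hs)).symm)
      · have : Tendsto (fun s => f s (α s)) (𝓝[<] t) (𝓝 (f t p)) :=
          hf.tendsto.comp (tendsto_nhdsWithin_of_tendsto_nhds tendsto_id |>.prodMk_nhds hαT)
        exact this.congr' (eventuallyEq_of_mem (Ioo_mem_nhdsLT hT) fun s hs =>
          (hα' s hs).deriv.symm)
    have hright : HasDerivWithinAt γ (f t p) (Ici t) t := by
      have := (hβ t ⟨le_rfl, ht.2.le⟩).mono_of_mem_nhdsWithin (Icc_mem_nhdsGE ht.2)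
      rw [hβT] at this
      exact this.congr hγβ (hγβ self_mem_Ici)
    have := hleft.union hright
    rwa [Iic_union_Ici, hasDerivWithinAt_univ] at this
  · rw [if_neg (not_lt.2 htT.le)]
    exact ((hβ t ⟨htT.le, ht.2.le⟩).hasDerivAt (Icc_mem_nhds htT ht.2)).congr_of_eventuallyEq
      (eventuallyEq_of_mem (Ioi_mem_nhds htT) fun s hs => hγβ (mem_Ici.2 (le_of_lt hs)))

variable [FiniteDimensional ℝ E]

theorem exists_tendsto_nhdsLT_of_norm_deriv_le {α α' : ℝ → E} {a T C : ℝ}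
    (hα : ∀ t ∈ Ico a T, HasDerivWithinAt α (α' t) (Ico a T) t)
    (hC : ∀ t ∈ Ico a T, ‖α' t‖ ≤ C) (haT : a < T) :
    ∃ p, Tendsto α (𝓝[<] T) (𝓝 p) := by
  have hlip : LipschitzOnWith C.toNNReal α (Ico a T) :=
    (convex_Ico a T).lipschitzOnWith_of_nnnorm_hasDerivWithin_le hα fun t ht => by
      rw [← NNReal.coe_le_coe, coe_nnnorm, Real.coe_toNNReal']
      exact (hC t ht).trans (le_max_left _ _)
  obtain ⟨g, hg, hαg⟩ := hlip.extend_finite_dimension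
  exact ⟨g T, (hg.continuous.continuousWithinAt (s := Iio T) (x := T)).tendsto.congr'
    (eventuallyEq_of_mem (Ico_mem_nhdsLT haT) hαg.symm)⟩

theorem exists_forall_mem_Icc_hasDerivWithinAt_of_lipschitzOnWith {f : ℝ → E → E} {T δ : ℝ}
    {p : E} {a K : ℝ≥0} (hδ : 0 < δ) (ha : 0 < a)
    (hf : ContinuousOn (Function.uncurry f) (Icc T (T + δ) ×ˢ closedBall p a))
    (hlip : ∀ t ∈ Icc T (T + δ), LipschitzOnWith K (f t) (closedBall p a)) :
    ∃ ε > 0, ∃ β : ℝ → E, β T = p ∧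
      ∀ t ∈ Icc T (T + ε), HasDerivWithinAt β (f t (β t)) (Icc T (T + ε)) t := by
  obtain ⟨L, hL⟩ :=
    (isCompact_Icc.prod (isCompact_closedBall p a)).exists_bound_of_continuousOn hf
  set L' : ℝ≥0 := L.toNNReal + 1
  -- moving at speed at most `L'`, a solution cannot leave the ball before time `a / L'`
  set ε : ℝ := min δ (a / L')
  have hε : 0 < ε := lt_min hδ (by positivity)
  have hεδ : Icc T (T + ε) ⊆ Icc T (T + δ) :=
    Icc_subset_Icc_right (by linarith [min_le_left δ (a / L')])
  have hpl : IsPicardLindelof f (tmin := T) (tmax := T + ε) ⟨T, le_rfl, by linarith⟩ p a 0 L' K :=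
    { lipschitzOnWith := fun t ht => hlip t (hεδ ht)
      continuousOn := fun q hq =>
        hf.comp (continuousOn_id.prodMk continuousOn_const) fun t ht => ⟨hεδ ht, hq⟩
      norm_le := fun t ht q hq => (hL (t, q) ⟨hεδ ht, hq⟩).trans <| by
        simp only [L', NNReal.coe_add, Real.coe_toNNReal', NNReal.coe_one]
        linarith [le_max_left L 0]
      mul_max_le := by
        show (L' : ℝ) * max (T + ε - T) (T - T) ≤ a - 0
        rw [add_sub_cancel_left, sub_self, max_eq_left hε.le, sub_zero]
        calc (L' : ℝ) * ε ≤ L' * (a / L') := by gcongr; exact min_le_right _ _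
          _ = a := mul_div_cancel₀ _ (by positivity) }
  exact ⟨ε, hε, hpl.exists_eq_forall_mem_Icc_hasDerivWithinAt₀⟩

theorem exists_extension_of_norm_le {f : ℝ → E → E} {α : ℝ → E} {t₀ T B : ℝ} (hT : t₀ < T)
    (hα : ∀ t ∈ Ico t₀ T, HasDerivAt α (f t (α t)) t)
    (hB : ∀ t ∈ Ico t₀ T, ‖f t (α t)‖ ≤ B)
    (hf : ContinuousOn (Function.uncurry f) (Ici t₀ ×ˢ univ))
    (hlip : ∀ p, ∃ K, ∀ t ∈ Icc T (T + 1), LipschitzOnWith K (f t) (closedBall p 1)) :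
    ∃ T' > T, ∃ γ : ℝ → E, EqOn γ α (Ico t₀ T) ∧ ∀ t ∈ Ico t₀ T', HasDerivAt γ (f t (γ t)) t := by
  obtain ⟨p, hp⟩ := exists_tendsto_nhdsLT_of_norm_deriv_le
    (fun t ht => (hα t ht).hasDerivWithinAt) hB hT
  obtain ⟨K, hK⟩ := hlip p
  have hf' : ContinuousOn (Function.uncurry f) (Icc T (T + 1) ×ˢ closedBall p (1 : ℝ≥0)) :=
    hf.mono (prod_mono (fun t ht => le_trans hT.le ht.1) (subset_univ _))
  obtain ⟨ε, hε, β, hβT, hβ⟩ :=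
    exists_forall_mem_Icc_hasDerivWithinAt_of_lipschitzOnWith one_pos one_pos hf' hK
  exact ⟨T + ε, by linarith, _, fun t ht => if_pos ht.2, hasDerivAt_ite_lt_of_tendsto hT hα hp
    hβ hβT (hf.continuousAt (prod_mem_nhds (Ici_mem_nhds hT) univ_mem))⟩

end ODE

theorem antitoneOn_mul_pow {A A' : ℝ → ℝ} {s : Set ℝ} {k : ℕ} (hs : Convex ℝ s)
    (hpos : ∀ t ∈ s, 0 < t) (hA : ∀ t ∈ s, HasDerivWithinAt A (A' t) s t)
    (hcond : ∀ t ∈ s, k * A t + t * A' t ≤ 0) : AntitoneOn (fun t => A t * t ^ k) s := by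
  have hderiv : ∀ t ∈ s, HasDerivWithinAt (fun t => A t * t ^ k)
      (A' t * t ^ k + A t * (k * t ^ (k - 1))) s t := fun t ht =>
    (hA t ht).mul ((hasDerivAt_pow k t).hasDerivWithinAt)
  refine antitoneOn_of_hasDerivWithinAt_nonpos hs (fun t ht => (hderiv t ht).continuousWithinAt)
    (fun t ht => (hderiv t (interior_subset ht)).mono interior_subset) fun t ht => ?_
  have ht := interior_subset ht
  have hfactor : t * (A' t * t ^ k + A t * (k * t ^ (k - 1))) = t ^ k * (k * A t + t * A' t) := by
    rcases k with _ | k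
    · simp
    · simp only [Nat.add_sub_cancel]; push_cast; ring
  have : t * (A' t * t ^ k + A t * (k * t ^ (k - 1))) ≤ 0 := by
    rw [hfactor]; exact mul_nonpos_of_nonneg_of_nonpos (pow_nonneg (hpos t ht).le k) (hcond t ht)
  exact nonpos_of_mul_nonpos_right this (hpos t ht)

theorem exists_tendsto_and_abs_sub_le_of_abs_deriv_le_rpow {g g' : ℝ → ℝ} {a p K : ℝ}
    (ha : 0 < a) (hp : 1 < p) (hg : ∀ t ∈ Ici a, HasDerivAt g (g' t) t)
    (hg' : ∀ t ∈ Ici a, |g' t| ≤ K * t ^ (-p)) :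
    ∃ L, Tendsto g atTop (𝓝 L) ∧ ∀ t ∈ Ici a, |g t - L| ≤ K / (p - 1) * t ^ (1 - p) := by
  have hint : ∀ c ∈ Ici a, IntegrableOn (fun t => K * t ^ (-p)) (Ioi c) := fun c hc =>
    (integrableOn_Ioi_rpow_of_lt (by linarith) (ha.trans_le hc)).const_mul K
  have hbound : ∀ c ∈ Ici a, ∀ᵐ t ∂(volume.restrict (Ioi c)), ‖g' t‖ ≤ K * t ^ (-p) :=
    fun c hc => (ae_restrict_mem measurableSet_Ioi).mono fun t ht =>
      hg' t (Ioi_subset_Ici hc ht)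
  -- `g'` is measurable on `Ioi c` because it agrees there with `deriv g`
  have hg'int : ∀ c ∈ Ici a, IntegrableOn g' (Ioi c) := fun c hc =>
    (hint c hc).mono' ((measurable_deriv g).aestronglyMeasurable.congr
      ((ae_restrict_mem measurableSet_Ioi).mono fun t ht =>
        (hg t (Ioi_subset_Ici hc ht)).deriv)) (hbound c hc)
  have hlim := tendsto_limUnder_of_hasDerivAt_of_integrableOn_Ioi
    (fun t ht => hg t (Ioi_subset_Ici_self ht)) (hg'int a self_mem_Ici)
  refine ⟨_, hlim, fun t ht => ?_⟩
  rw [abs_sub_comm, ← integral_Ioi_of_hasDerivAt_of_tendsto'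
    (fun s hs => hg s (Ici_subset_Ici.2 ht hs)) (hg'int t ht) hlim]
  calc |∫ s in Ioi t, g' s| ≤ ∫ s in Ioi t, K * s ^ (-p) :=
        norm_integral_le_of_norm_le (hint t ht) (hbound t ht)
    _ = K / (p - 1) * t ^ (1 - p) := by
        rw [integral_const_mul, integral_Ioi_rpow_of_lt (by linarith) (ha.trans_le ht),
          show -p + 1 = 1 - p by ring, neg_div, ← div_neg, neg_sub]
        ring

theorem exists_tendsto_sub_affine_of_abs_deriv2_le_rpow {x x' x'' : ℝ → ℝ} {a p K : ℝ}
    (ha : 0 < a) (hp : 2 < p) (hx : ∀ t ∈ Ici a, HasDerivAt x (x' t) t)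
    (hx' : ∀ t ∈ Ici a, HasDerivAt x' (x'' t) t) (hx'' : ∀ t ∈ Ici a, |x'' t| ≤ K * t ^ (-p)) :
    ∃ x₁ x₂ : ℝ, Tendsto (fun t => x t - (x₁ * t + x₂)) atTop (𝓝 0) := by
  obtain ⟨x₁, -, hx₁⟩ :=
    exists_tendsto_and_abs_sub_le_of_abs_deriv_le_rpow ha (by linarith) hx' hx''
  obtain ⟨x₂, hx₂, -⟩ := exists_tendsto_and_abs_sub_le_of_abs_deriv_le_rpow
    (g := fun t => x t - x₁ * t) (p := p - 1) ha (by linarith)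
    (fun t ht => by
      have := (hx t ht).sub ((hasDerivAt_id t).const_mul x₁)
      rwa [mul_one] at this)
    (fun t ht => by rw [neg_sub]; exact hx₁ t ht)
  refine ⟨x₁, x₂, ?_⟩
  simpa only [sub_sub] using tendsto_sub_nhds_zero_iff.2 hx₂

theorem isLittleO_id_or_exists_tendsto_sub_affine {x : ℝ → ℝ} {x₁ x₂ : ℝ}
    (h : Tendsto (fun t => x t - (x₁ * t + x₂)) atTop (𝓝 0)) :
    (fun t => x t) =o[atTop] (fun t : ℝ => t) ∨
      ∃ x₁ x₂ : ℝ, x₁ ≠ 0 ∧ Tendsto (fun t => x t - (x₁ * t + x₂)) atTop (𝓝 0) := by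
  by_cases hx₁ : x₁ = 0
  · subst hx₁
    have hx : Tendsto x atTop (𝓝 x₂) := by simpa using h.add_const x₂
    exact Or.inl ((hx.isBigO_one ℝ).trans_isLittleO (isLittleO_const_id_atTop 1))
  · exact Or.inr ⟨x₁, x₂, hx₁, h⟩

namespace EmdenFowler

def vectorField (A : ℝ → ℝ) (m : ℕ) (t : ℝ) (p : ℝ × ℝ) : ℝ × ℝ := (p.2, -(A t * p.1 ^ m))

def IsSolutionOn (A : ℝ → ℝ) (m : ℕ) (x x' x'' : ℝ → ℝ) (s : Set ℝ) : Prop :=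
  ∀ t ∈ s, HasDerivAt x (x' t) t ∧ HasDerivAt x' (x'' t) t ∧ x'' t + A t * x t ^ m = 0

variable {A : ℝ → ℝ} {m : ℕ} {s : Set ℝ}

theorem IsSolutionOn.hasDerivAt_vectorField {x x' x'' : ℝ → ℝ} (h : IsSolutionOn A m x x' x'' s) :
    ∀ t ∈ s, HasDerivAt (fun t => (x t, x' t)) (vectorField A m t (x t, x' t)) t := fun t ht => by
  obtain ⟨hx, hx', heq⟩ := h t ht
  simpa only [vectorField, eq_neg_of_add_eq_zero_left heq] using hx.prodMk hx'

theorem isSolutionOn_of_hasDerivAt_vectorField {γ : ℝ → ℝ × ℝ}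
    (h : ∀ t ∈ s, HasDerivAt γ (vectorField A m t (γ t)) t) :
    IsSolutionOn A m (fun t => (γ t).1) (fun t => (γ t).2) (fun t => -(A t * (γ t).1 ^ m)) s :=
  fun t ht => ⟨hasFDerivAt_fst.comp_hasDerivAt (f := γ) t (h t ht),
    hasFDerivAt_snd.comp_hasDerivAt (f := γ) t (h t ht), neg_add_cancel _⟩

theorem continuousOn_uncurry_vectorField (hA : ContinuousOn A s) :
    ContinuousOn (Function.uncurry (vectorField A m)) (s ×ˢ univ) :=
  continuous_snd.snd.continuousOn.prodMk
    ((hA.comp continuousOn_fst fun _ h => h.1).mul (continuous_snd.fst.pow m).continuousOn).neg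

theorem exists_lipschitzOnWith_vectorField (hA : ContinuousOn A s) (hs : IsCompact s) (p : ℝ × ℝ)
    (r : ℝ) : ∃ K, ∀ t ∈ s, LipschitzOnWith K (vectorField A m t) (closedBall p r) := by
  obtain ⟨Ka, hKa⟩ := hs.exists_bound_of_continuousOn hA
  obtain ⟨Kp, hKp⟩ := (contDiff_fst.pow m).contDiffOn.exists_lipschitzOnWith one_ne_zero
    (convex_closedBall p r) (isCompact_closedBall p r)
  refine ⟨max 1 (Ka.toNNReal * Kp), fun t ht =>
    LipschitzOnWith.of_dist_le_mul fun q hq q' hq' => ?_⟩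
  have h1 : dist q.2 q'.2 ≤ dist q q' := by rw [Prod.dist_eq]; exact le_max_right _ _
  have h2 : |q.1 ^ m - q'.1 ^ m| ≤ Kp * dist q q' := by
    simpa [Real.dist_eq] using hKp.dist_le_mul q hq q' hq'
  have h3 : |A t| ≤ Ka.toNNReal := (hKa t ht).trans (Real.le_coe_toNNReal Ka)
  rw [Prod.dist_eq, NNReal.coe_max, NNReal.coe_one, NNReal.coe_mul]
  refine max_le (h1.trans (le_mul_of_one_le_left dist_nonneg (le_max_left _ _))) ?_
  calc dist (-(A t * q.1 ^ m)) (-(A t * q'.1 ^ m)) = |A t| * |q.1 ^ m - q'.1 ^ m| := by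
        rw [dist_neg_neg, Real.dist_eq, ← mul_sub, abs_mul]
    _ ≤ Ka.toNNReal * (Kp * dist q q') := by gcongr
    _ ≤ max 1 (Ka.toNNReal * Kp) * dist q q' := by
        rw [← mul_assoc]; exact mul_le_mul_of_nonneg_right (le_max_right _ _) dist_nonneg

theorem IsSolutionOn.exists_extension {x x' x'' : ℝ → ℝ} {t₀ T B : ℝ} (hT : t₀ < T)
    (hA : ContinuousOn A (Ici t₀)) (hsol : IsSolutionOn A m x x' x'' (Ico t₀ T))
    (hB : ∀ t ∈ Ico t₀ T, |x' t| ≤ B) :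
    ∃ T' > T, ∃ y y' y'' : ℝ → ℝ, IsSolutionOn A m y y' y'' (Ico t₀ T') ∧ EqOn y x (Ico t₀ T) := by
  set M := |x t₀| + B * (T - t₀)
  have hx : ∀ t ∈ Ico t₀ T, |x t| ≤ M := fun t ht => by
    have hdist := norm_image_sub_le_of_norm_deriv_le_segment' (f' := x')
      (fun s hs => (hsol s ⟨hs.1, hs.2.trans_lt ht.2⟩).1.hasDerivWithinAt)
      (fun s hs => hB s ⟨hs.1, hs.2.trans ht.2⟩) t ⟨ht.1, le_rfl⟩
    rw [Real.norm_eq_abs] at hdist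
    have hB0 : 0 ≤ B := (abs_nonneg _).trans (hB t ht)
    have : B * (t - t₀) ≤ B * (T - t₀) := by gcongr; exact ht.2.le
    linarith [abs_sub_abs_le_abs_sub (x t) (x t₀)]
  have hAc : ContinuousOn A (Icc t₀ (T + 1)) := hA.mono fun t ht => ht.1
  obtain ⟨Ka, hKa⟩ := isCompact_Icc.exists_bound_of_continuousOn hAc
  have hbound : ∀ t ∈ Ico t₀ T, ‖vectorField A m t (x t, x' t)‖ ≤ max B (Ka * M ^ m) :=
    fun t ht => by
      have hAt : |A t| ≤ Ka := hKa t ⟨ht.1, by linarith [ht.2]⟩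
      simp only [vectorField, Prod.norm_mk, Real.norm_eq_abs, abs_neg, abs_mul, abs_pow]
      exact max_le_max (hB t ht) (mul_le_mul hAt (pow_le_pow_left₀ (abs_nonneg _) (hx t ht) m)
        (by positivity) ((abs_nonneg _).trans hAt))
  obtain ⟨T', hT', γ, hγx, hγ⟩ := exists_extension_of_norm_le hT hsol.hasDerivAt_vectorField hbound
    (continuousOn_uncurry_vectorField hA)
    fun p => exists_lipschitzOnWith_vectorField (hAc.mono (Icc_subset_Icc_left hT.le))
      isCompact_Icc p 1
  exact ⟨T', hT', _, _, _, isSolutionOn_of_hasDerivAt_vectorField hγ,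
    fun t ht => congrArg Prod.fst (hγx ht)⟩

def energy (n : ℕ) (A x x' : ℝ → ℝ) (t : ℝ) : ℝ := n * x' t ^ 2 + A t * x t ^ (2 * n)

theorem IsSolutionOn.energy_antitoneOn {n : ℕ} {A' x x' x'' : ℝ → ℝ} (hs : Convex ℝ s)
    (hsol : IsSolutionOn A (2 * n - 1) x x' x'' s) (hA : ∀ t ∈ s, HasDerivWithinAt A (A' t) s t)
    (hA' : ∀ t ∈ s, A' t ≤ 0) : AntitoneOn (energy n A x x') s := by
  have hderiv : ∀ t ∈ s, HasDerivWithinAt (energy n A x x') (A' t * x t ^ (2 * n)) s t := by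
    intro t ht
    obtain ⟨hx, hx', heq⟩ := hsol t ht
    refine (((hx'.pow 2).const_mul (n : ℝ)).hasDerivWithinAt.add
      ((hA t ht).mul (hx.pow (2 * n)).hasDerivWithinAt)).congr_deriv ?_
    rw [eq_neg_of_add_eq_zero_left heq, Pi.pow_apply]
    push_cast
    ring
  exact antitoneOn_of_hasDerivWithinAt_nonpos hs (fun t ht => (hderiv t ht).continuousWithinAt)
    (fun t ht => (hderiv t (interior_subset ht)).mono interior_subset) fun t ht =>
      mul_nonpos_of_nonpos_of_nonneg (hA' t (interior_subset ht))
        (Even.pow_nonneg (even_two_mul n) _)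

theorem IsSolutionOn.abs_deriv_le_sqrt_energy {n : ℕ} (hn : 0 < n) {A' x x' x'' : ℝ → ℝ}
    {t₀ : ℝ} (hs : Convex ℝ s) (hpos : ∀ t ∈ s, 0 < t)
    (hsol : IsSolutionOn A (2 * n - 1) x x' x'' s) (hA : ∀ t ∈ s, HasDerivWithinAt A (A' t) s t)
    (hA_nonneg : ∀ t ∈ s, 0 ≤ A t) (hcond : ∀ t ∈ s, (2 * n + 2) * A t + t * A' t ≤ 0)
    (ht₀ : t₀ ∈ s) {t : ℝ} (ht : t ∈ s) (htt₀ : t₀ ≤ t) :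
    |x' t| ≤ √(energy n A x x' t₀ / n) := by
  have hn' : (0 : ℝ) < n := Nat.cast_pos.2 hn
  have hA' : ∀ t ∈ s, A' t ≤ 0 := fun t ht => by
    nlinarith [hpos t ht, hA_nonneg t ht, hcond t ht]
  have hpot : 0 ≤ A t * x t ^ (2 * n) :=
    mul_nonneg (hA_nonneg t ht) (Even.pow_nonneg (even_two_mul n) _)
  calc |x' t| ≤ √(energy n A x x' t / n) :=
        Real.abs_le_sqrt (by rw [le_div_iff₀ hn', energy]; nlinarith)
    _ ≤ √(energy n A x x' t₀ / n) := Real.sqrt_le_sqrt (div_le_div_of_nonneg_right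
        ((hsol.energy_antitoneOn hs hA hA') ht₀ ht htt₀) hn'.le)

theorem abs_mul_pow_le_rpow {n : ℕ} (hn : 0 < n) {a u c C t : ℝ} (ht : 0 < t) (ha : 0 ≤ a)
    (hac : a * t ^ (2 * n + 2) ≤ c) (hu : |u| ≤ C * t) :
    |a * u ^ (2 * n - 1)| ≤ c * C ^ (2 * n - 1) * t ^ (-3 : ℝ) := by
  have hC : 0 ≤ C := nonneg_of_mul_nonneg_left ((abs_nonneg u).trans hu) ht
  have hexp : t ^ (2 * n - 1) * t ^ 3 = t ^ (2 * n + 2) := by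
    rw [← pow_add]; congr 1; omega
  rw [Real.rpow_neg ht.le, show (3 : ℝ) = (3 : ℕ) by norm_num, Real.rpow_natCast, abs_mul,
    abs_of_nonneg ha, abs_pow, ← div_eq_mul_inv, le_div_iff₀ (by positivity)]
  calc a * |u| ^ (2 * n - 1) * t ^ 3 ≤ a * (C * t) ^ (2 * n - 1) * t ^ 3 := by gcongr
    _ = a * t ^ (2 * n + 2) * C ^ (2 * n - 1) := by rw [mul_pow, ← hexp]; ring
    _ ≤ c * C ^ (2 * n - 1) := by gcongr

theorem IsSolutionOn.isLittleO_or_tendsto_sub_affine {n : ℕ} (hn : 0 < n) {t₀ : ℝ}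
    (ht₀ : 1 ≤ t₀) {A' x x' x'' : ℝ → ℝ} (hsol : IsSolutionOn A (2 * n - 1) x x' x'' (Ici t₀))
    (hA : ∀ t ∈ Ici t₀, HasDerivWithinAt A (A' t) (Ici t₀) t)
    (hA_nonneg : ∀ t ∈ Ici t₀, 0 ≤ A t)
    (hcond : ∀ t ∈ Ici t₀, (2 * n + 2) * A t + t * A' t ≤ 0) :
    (fun t => x t) =o[atTop] (fun t : ℝ => t) ∨
      ∃ x₁ x₂ : ℝ, x₁ ≠ 0 ∧ Tendsto (fun t => x t - (x₁ * t + x₂)) atTop (𝓝 0) := by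
  have hpos : ∀ t ∈ Ici t₀, 0 < t := fun t ht => by linarith [mem_Ici.1 ht]
  set B := √(energy n A x x' t₀ / n)
  have hx' : ∀ t ∈ Ici t₀, |x' t| ≤ B := fun t ht => hsol.abs_deriv_le_sqrt_energy hn
    (convex_Ici t₀) hpos hA hA_nonneg hcond self_mem_Ici ht ht
  have hx : ∀ t ∈ Ici t₀, |x t| ≤ (|x t₀| + B) * t := fun t ht => by
    have hdist := norm_image_sub_le_of_norm_deriv_le_segment' (f' := x')
      (fun s hs => (hsol s hs.1).1.hasDerivWithinAt) (fun s hs => hx' s hs.1) t ⟨ht, le_rfl⟩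
    rw [Real.norm_eq_abs] at hdist
    have ht1 : 1 ≤ t := ht₀.trans ht
    nlinarith [abs_sub_abs_le_abs_sub (x t) (x t₀), abs_nonneg (x t₀), Real.sqrt_nonneg
      (energy n A x x' t₀ / n)]
  have hdecay : ∀ t ∈ Ici t₀, A t * t ^ (2 * n + 2) ≤ A t₀ * t₀ ^ (2 * n + 2) := fun t ht =>
    antitoneOn_mul_pow (convex_Ici t₀) hpos hA (by push_cast; exact hcond) self_mem_Ici ht ht
  have hx'' : ∀ t ∈ Ici t₀,
      |x'' t| ≤ A t₀ * t₀ ^ (2 * n + 2) * (|x t₀| + B) ^ (2 * n - 1) * t ^ (-3 : ℝ) :=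
    fun t ht => by
      rw [eq_neg_of_add_eq_zero_left (hsol t ht).2.2, abs_neg]
      exact abs_mul_pow_le_rpow hn (hpos t ht) (hA_nonneg t ht) (hdecay t ht) (hx t ht)
  obtain ⟨x₁, x₂, h⟩ := exists_tendsto_sub_affine_of_abs_deriv2_le_rpow (hpos t₀ self_mem_Ici)
    (by norm_num : (2 : ℝ) < 3) (fun t ht => (hsol t ht).1) (fun t ht => (hsol t ht).2.1) hx''
  exact isLittleO_id_or_exists_tendsto_sub_affine h

end EmdenFowler

theorem emden_fowler_caligo_type_general
    (n : ℕ) (hn : 1 ≤ n) (t₀ : ℝ) (ht₀ : 1 ≤ t₀) (A A' : ℝ → ℝ)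
    (hA : ∀ t ∈ Set.Ici t₀, HasDerivWithinAt A (A' t) (Set.Ici t₀) t)
    (hA_nonneg : ∀ t ∈ Set.Ici t₀, 0 ≤ A t)
    (hcond : ∀ t ∈ Set.Ici t₀, (2 * n + 2) * A t + t * A' t ≤ 0)
    (Tinf : EReal) (hT : (t₀ : EReal) < Tinf)
    (x x' x'' : ℝ → ℝ)
    (hx : ∀ t : ℝ, t₀ ≤ t → (t : EReal) < Tinf → HasDerivAt x (x' t) t)
    (hx' : ∀ t : ℝ, t₀ ≤ t → (t : EReal) < Tinf → HasDerivAt x' (x'' t) t)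
    (heq : ∀ t : ℝ, t₀ ≤ t → (t : EReal) < Tinf →
      x'' t + A t * x t ^ (2 * n - 1) = 0)
    (hmax : ∀ (y y' y'' : ℝ → ℝ) (T' : EReal), Tinf < T' →
      (∀ t : ℝ, t₀ ≤ t → (t : EReal) < T' → HasDerivAt y (y' t) t) →
      (∀ t : ℝ, t₀ ≤ t → (t : EReal) < T' → HasDerivAt y' (y'' t) t) →
      (∀ t : ℝ, t₀ ≤ t → (t : EReal) < T' → y'' t + A t * y t ^ (2 * n - 1) = 0) →
      ¬ (∀ t : ℝ, t₀ ≤ t → (t : EReal) < Tinf → y t = x t)) :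
    Tinf = ⊤ ∧
      ((fun t => x t) =o[atTop] (fun t : ℝ => t) ∨
        ∃ x₁ x₂ : ℝ, x₁ ≠ 0 ∧
          Tendsto (fun t => x t - (x₁ * t + x₂)) atTop (nhds 0)) := by
  have hsol : ∀ T, T ≤ Tinf →
      EmdenFowler.IsSolutionOn A (2 * n - 1) x x' x'' {t | t₀ ≤ t ∧ (t : EReal) < T} :=
    fun T hT t ht => ⟨hx t ht.1 (ht.2.trans_le hT), hx' t ht.1 (ht.2.trans_le hT),
      heq t ht.1 (ht.2.trans_le hT)⟩
  have hTinf : Tinf = ⊤ := by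
    by_contra hne
    obtain ⟨T, rfl⟩ : ∃ T : ℝ, Tinf = T :=
      ⟨Tinf.toReal, (EReal.coe_toReal hne (ne_bot_of_gt hT)).symm⟩
    have hsolT : EmdenFowler.IsSolutionOn A (2 * n - 1) x x' x'' (Ico t₀ T) := fun t ht =>
      hsol T le_rfl t ⟨ht.1, EReal.coe_lt_coe_iff.2 ht.2⟩
    have hT : t₀ < T := EReal.coe_lt_coe_iff.1 hT
    obtain ⟨T', hTT', y, y', y'', hy, hyx⟩ := hsolT.exists_extension hT
      (fun t ht => (hA t ht).continuousWithinAt) fun t ht =>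
        hsolT.abs_deriv_le_sqrt_energy hn (convex_Ico t₀ T) (fun s hs => by linarith [hs.1])
          (fun s hs => (hA s hs.1).mono Ico_subset_Ici_self) (fun s hs => hA_nonneg s hs.1)
          (fun s hs => hcond s hs.1) ⟨le_rfl, hT⟩ ht ht.1
    have hmem : ∀ T'' : ℝ, ∀ t, t₀ ≤ t → (t : EReal) < T'' → t ∈ Ico t₀ T'' :=
      fun _ t h1 h2 => ⟨h1, EReal.coe_lt_coe_iff.1 h2⟩
    exact hmax y y' y'' T' (EReal.coe_lt_coe_iff.2 hTT')
      (fun t h1 h2 => (hy t (hmem _ t h1 h2)).1) (fun t h1 h2 => (hy t (hmem _ t h1 h2)).2.1)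
      (fun t h1 h2 => (hy t (hmem _ t h1 h2)).2.2) fun t h1 h2 => hyx (hmem _ t h1 h2)
  subst hTinf
  refine ⟨rfl, EmdenFowler.IsSolutionOn.isLittleO_or_tendsto_sub_affine hn ht₀
    (x' := x') (x'' := x'')
    (fun t ht => hsol ⊤ le_rfl t ⟨ht, EReal.coe_lt_top t⟩) hA hA_nonneg hcond⟩

/-- Theorem 3: Emden–Fowler equation `x″ + A(t)x^{2n−1} = 0` with `A` of class `C¹`,
`A(t) ≥ 0` and `(2n+2)A(t) + t·A′(t) ≤ 0` for `t ≥ t₀ ≥ 1`: every (maximal, i.e.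
non-extendable) solution is defined on all of `[t₀, ∞)` and satisfies either
`x(t) = o(t)` or `x(t) = x₁t + x₂ + o(1)` with `x₁ ≠ 0`, as `t → +∞`. -/
theorem emden_fowler_caligo_type
    (n : ℕ) (hn : 1 ≤ n) (t₀ : ℝ) (ht₀ : 1 ≤ t₀) (A A' : ℝ → ℝ)
    (hA : ∀ t ∈ Set.Ici t₀, HasDerivWithinAt A (A' t) (Set.Ici t₀) t)
    (hA'_cont : ContinuousOn A' (Set.Ici t₀))
    (hA_nonneg : ∀ t ∈ Set.Ici t₀, 0 ≤ A t)
    (hcond : ∀ t ∈ Set.Ici t₀, (2 * n + 2) * A t + t * A' t ≤ 0)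
    (Tinf : EReal) (hT : (t₀ : EReal) < Tinf)
    (x x' x'' : ℝ → ℝ)
    (hx : ∀ t : ℝ, t₀ ≤ t → (t : EReal) < Tinf → HasDerivAt x (x' t) t)
    (hx' : ∀ t : ℝ, t₀ ≤ t → (t : EReal) < Tinf → HasDerivAt x' (x'' t) t)
    (heq : ∀ t : ℝ, t₀ ≤ t → (t : EReal) < Tinf →
      x'' t + A t * x t ^ (2 * n - 1) = 0)
    (hmax : ∀ (y y' y'' : ℝ → ℝ) (T' : EReal), Tinf < T' →
      (∀ t : ℝ, t₀ ≤ t → (t : EReal) < T' → HasDerivAt y (y' t) t) →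
      (∀ t : ℝ, t₀ ≤ t → (t : EReal) < T' → HasDerivAt y' (y'' t) t) →
      (∀ t : ℝ, t₀ ≤ t → (t : EReal) < T' → y'' t + A t * y t ^ (2 * n - 1) = 0) →
      ¬ (∀ t : ℝ, t₀ ≤ t → (t : EReal) < Tinf → y t = x t)) :
    Tinf = ⊤ ∧
      ((fun t => x t) =o[atTop] (fun t : ℝ => t) ∨
        ∃ x₁ x₂ : ℝ, x₁ ≠ 0 ∧
          Tendsto (fun t => x t - (x₁ * t + x₂)) atTop (nhds 0)) :=
  emden_fowler_caligo_type_general n hn t₀ ht₀ A A' hA hA_nonneg hcond Tinf hT x x' x'' hx hx' heq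
    hmax
end

section
/- Let f : [t₀,∞) × ℝ → ℝ (t₀ ≥ 1) be continuous with continuous partial derivative ∂f/∂v, and assume v·f(t,v) ≤ 0 and ∂f/∂v(t,v) ≤ 0 for all t ≥ t₀, v ∈ ℝ. Let (u,v) be a solution of the system u′ = −t f(t,v), v′ = u/t² on an interval [t₀,T) and define V(t) = u(t)²/2 + u(t)·∫_{t₀}^{t} s f(s, v(t)) ds. Then V is nonincreasing on [t₀,T); indeed V′(t) = −t f(t,v(t))·∫_{t₀}^{t} s f(s,v(t)) ds + (u(t)²/t²)·∫_{t₀}^{t} s (∂f/∂v)(s,v(t)) ds ≤ 0. -/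
/-!
Differentiating `V(t) = u²/2 + u·I(t, v(t))`, with `I(x, b) = ∫_{t₀}^{x} s f(s, b) ds`, the two
terms `± u·t f(t, v)` coming from `u′` and from the upper limit of `I` cancel, leaving
`V′ = −t f(t,v)·I + (u²/t²)·∫_{t₀}^{t} s ∂f/∂v(s,v) ds`. Both partial derivatives of `I` are
continuous, so `I` is C¹ and the chain rule along `τ ↦ (τ, v τ)` applies. The second term is `≤ 0`
since `∂f/∂v ≤ 0`; the first since `w·f(·,w) ≤ 0` forces `f(t,w)` and `f(s,w)` to share a sign
(for `w = 0` by continuity). Monotonicity then follows from the mean value theorem.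
-/

open Filter Set Function

namespace intervalIntegral

variable {E : Type*} [NormedAddCommGroup E] [NormedSpace ℝ E] {k kv : ℝ → ℝ → E}

theorem hasDerivAt_integral_of_continuous_deriv (hk : Continuous (uncurry k))
    (hkv : Continuous (uncurry kv)) (hderiv : ∀ s b, HasDerivAt (k s) (kv s b) b)
    (a t w : ℝ) :
    HasDerivAt (fun b => ∫ s in a..t, k s b) (∫ s in a..t, kv s w) w := by
  obtain ⟨C, hC⟩ := (isCompact_uIcc.prod (isCompact_closedBall w 1)).exists_bound_of_continuousOn
    hkv.continuousOn
  refine (hasDerivAt_integral_of_dominated_loc_of_deriv_le (F := fun b s => k s b)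
    (F' := fun b s => kv s b) (bound := fun _ => C) (Metric.ball_mem_nhds w one_pos)
    (Eventually.of_forall fun b => (hk.uncurry_right b).aestronglyMeasurable)
    ((hk.uncurry_right w).intervalIntegrable _ _)
    (hkv.uncurry_right w).aestronglyMeasurable
    (MeasureTheory.ae_of_all _ fun s hs b hb =>
      hC (s, b) ⟨uIoc_subset_uIcc hs, Metric.ball_subset_closedBall hb⟩)
    intervalIntegrable_const (MeasureTheory.ae_of_all _ fun s _ b _ => hderiv s b)).2

theorem hasStrictFDerivAt_integral_uncurry [CompleteSpace E] (hk : Continuous (uncurry k))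
    (hkv : Continuous (uncurry kv)) (hderiv : ∀ s b, HasDerivAt (k s) (kv s b) b)
    (a : ℝ) (p : ℝ × ℝ) :
    HasStrictFDerivAt (uncurry fun x b => ∫ s in a..x, k s b)
      ((ContinuousLinearMap.toSpanSingleton ℝ (k p.1 p.2)).coprod
        (ContinuousLinearMap.toSpanSingleton ℝ (∫ s in a..p.1, kv s p.2))) p := by
  have hprim : Continuous fun q : ℝ × ℝ => ∫ s in a..q.1, kv s q.2 :=
    (continuous_parametric_primitive_of_continuous (f := fun b s => kv s b)
      (hkv.comp continuous_swap)).comp continuous_swap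
  refine hasStrictFDerivAt_uncurry_coprod (𝕜 := ℝ) (u := p) (f := fun x b => ∫ s in a..x, k s b)
    (f₁ := fun x b => ContinuousLinearMap.toSpanSingleton ℝ (k x b))
    (f₂ := fun x b => ContinuousLinearMap.toSpanSingleton ℝ (∫ s in a..x, kv s b))
    (Eventually.of_forall fun q => ?_) (Eventually.of_forall fun q => ?_) ?_ ?_
  · have hkq := hk.uncurry_right q.2
    exact (integral_hasDerivAt_right (hkq.intervalIntegrable _ _)
      (hkq.stronglyMeasurableAtFilter _ _) hkq.continuousAt).hasFDerivAt
  · exact (hasDerivAt_integral_of_continuous_deriv hk hkv hderiv a q.1 q.2).hasFDerivAt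
  · exact ((ContinuousLinearMap.toSpanSingletonLIE ℝ E).continuous.comp hk).continuousAt
  · exact ((ContinuousLinearMap.toSpanSingletonLIE ℝ E).continuous.comp hprim).continuousAt

theorem hasDerivAt_integral_comp [CompleteSpace E] (hk : Continuous (uncurry k))
    (hkv : Continuous (uncurry kv)) (hderiv : ∀ s b, HasDerivAt (k s) (kv s b) b)
    (a : ℝ) {v : ℝ → ℝ} {c t : ℝ} (hv : HasDerivAt v c t) :
    HasDerivAt (fun τ => ∫ s in a..τ, k s (v τ)) (k t (v t) + c • ∫ s in a..t, kv s (v t)) t := by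
  simpa [Function.comp_def] using
    (hasStrictFDerivAt_integral_uncurry hk hkv hderiv a (t, v t)).hasFDerivAt.comp_hasDerivAt t
      ((hasDerivAt_id t).prodMk hv)

theorem integral_comp_max_of_le {F : ℝ → E} {a b : ℝ} (hab : a ≤ b) :
    ∫ s in a..b, F (max s a) = ∫ s in a..b, F s :=
  integral_congr fun s hs => by rw [uIcc_of_le hab] at hs; rw [max_eq_left hs.1]

end intervalIntegral

theorem ContinuousOn.continuous_comp_max_fst {X Y : Type*} [TopologicalSpace X]
    [TopologicalSpace Y] {F : ℝ × X → Y} {a : ℝ} (hF : ContinuousOn F (Ici a ×ˢ univ)) :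
    Continuous fun p : ℝ × X => F (max p.1 a, p.2) :=
  hF.comp_continuous ((continuous_fst.max continuous_const).prodMk continuous_snd)
    fun _ => ⟨mem_Ici.2 (le_max_right _ _), trivial⟩

theorem nonpos_at_zero_of_forall_mul_nonpos {φ : ℝ → ℝ} (hφ : ContinuousAt φ 0)
    (h : ∀ w, w * φ w ≤ 0) : φ 0 ≤ 0 :=
  le_of_tendsto (hφ.tendsto.mono_left (nhdsWithin_le_nhds (s := Ioi 0)))
    (eventually_nhdsWithin_of_forall fun w (hw : 0 < w) => nonpos_of_mul_nonpos_right (h w) hw)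

theorem mul_nonneg_of_forall_mul_nonpos {φ ψ : ℝ → ℝ} (hφ : ContinuousAt φ 0)
    (hψ : ContinuousAt ψ 0) (hφ' : ∀ w, w * φ w ≤ 0) (hψ' : ∀ w, w * ψ w ≤ 0) (w : ℝ) :
    0 ≤ φ w * ψ w := by
  rcases lt_trichotomy w 0 with hw | rfl | hw
  · exact mul_nonneg (nonneg_of_mul_nonpos_right (hφ' w) hw)
      (nonneg_of_mul_nonpos_right (hψ' w) hw)
  · exact mul_nonneg_of_nonpos_of_nonpos (nonpos_at_zero_of_forall_mul_nonpos hφ hφ')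
      (nonpos_at_zero_of_forall_mul_nonpos hψ hψ')
  · exact mul_nonneg_of_nonpos_of_nonpos (nonpos_of_mul_nonpos_right (hφ' w) hw)
      (nonpos_of_mul_nonpos_right (hψ' w) hw)

noncomputable section Lyapunov

variable (t₀ : ℝ) (f fv : ℝ → ℝ → ℝ) (u v : ℝ → ℝ)

def lyapunov (τ : ℝ) : ℝ := u τ ^ 2 / 2 + u τ * ∫ s in t₀..τ, s * f s (v τ)

def lyapunovDeriv (t : ℝ) : ℝ :=
  -(t * f t (v t)) * (∫ s in t₀..t, s * f s (v t)) +
    u t ^ 2 / t ^ 2 * ∫ s in t₀..t, s * fv s (v t)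

variable {t₀ f fv u v}

theorem hasDerivWithinAt_lyapunov (hf : ContinuousOn (uncurry f) (Ici t₀ ×ˢ univ))
    (hfv : ∀ t ∈ Ici t₀, ∀ w, HasDerivAt (f t) (fv t w) w)
    (hfv_cont : ContinuousOn (uncurry fv) (Ici t₀ ×ˢ univ))
    {S : Set ℝ} (hS : S ⊆ Ici t₀) {t : ℝ} (ht : t₀ ≤ t)
    (hu : HasDerivAt u (-(t * f t (v t))) t) (hv : HasDerivAt v (u t / t ^ 2) t) :
    HasDerivWithinAt (lyapunov t₀ f u v) (lyapunovDeriv t₀ f fv u v t) S t := by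
  -- Freezing `f` at `t₀` to the left of `t₀` makes the kernels continuous on all of `ℝ × ℝ`.
  set k : ℝ → ℝ → ℝ := fun s b => max s t₀ * f (max s t₀) b
  set kv : ℝ → ℝ → ℝ := fun s b => max s t₀ * fv (max s t₀) b
  have hk : Continuous (uncurry k) := (continuousOn_fst.mul hf).continuous_comp_max_fst
  have hkv : Continuous (uncurry kv) := (continuousOn_fst.mul hfv_cont).continuous_comp_max_fst
  have hderiv : ∀ s b, HasDerivAt (k s) (kv s b) b := fun s b =>
    (hfv _ (le_max_right s t₀) b).const_mul _
  have hW : HasDerivAt (fun τ => u τ ^ 2 / 2 + u τ * ∫ s in t₀..τ, k s (v τ)) _ t :=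
    ((hu.pow 2).div_const 2).add
      (hu.mul (intervalIntegral.hasDerivAt_integral_comp hk hkv hderiv t₀ hv))
  have hk_eq : ∀ τ, t₀ ≤ τ → ∀ b, ∫ s in t₀..τ, k s b = ∫ s in t₀..τ, s * f s b := fun τ hτ b =>
    intervalIntegral.integral_comp_max_of_le (F := fun s => s * f s b) hτ
  have hkv_eq : ∫ s in t₀..t, kv s (v t) = ∫ s in t₀..t, s * fv s (v t) :=
    intervalIntegral.integral_comp_max_of_le (F := fun s => s * fv s (v t)) ht
  refine (hW.hasDerivWithinAt.congr (fun τ hτ => ?_) ?_).congr_deriv ?_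
  · simp only [lyapunov, hk_eq τ (hS hτ)]
  · simp only [lyapunov, hk_eq t ht]
  · simp only [lyapunovDeriv, k, max_eq_left ht, hk_eq t ht, hkv_eq, smul_eq_mul]
    ring

theorem lyapunovDeriv_nonpos (ht₀ : 0 ≤ t₀) (hcont : ∀ t ∈ Ici t₀, ContinuousAt (f t) 0)
    (hsign : ∀ t ∈ Ici t₀, ∀ w, w * f t w ≤ 0) (hfv_nonpos : ∀ t ∈ Ici t₀, ∀ w, fv t w ≤ 0)
    {t : ℝ} (ht : t₀ ≤ t) : lyapunovDeriv t₀ f fv u v t ≤ 0 := by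
  have hf_prod : 0 ≤ t * f t (v t) * ∫ s in t₀..t, s * f s (v t) := by
    rw [← intervalIntegral.integral_const_mul]
    refine intervalIntegral.integral_nonneg ht fun s hs => ?_
    have hff := mul_nonneg_of_forall_mul_nonpos (hcont t ht) (hcont s hs.1) (hsign t ht)
      (hsign s hs.1) (v t)
    have hts := mul_nonneg (ht₀.trans ht) (ht₀.trans hs.1)
    nlinarith [mul_nonneg hts hff]
  have hfv_int : 0 ≤ -∫ s in t₀..t, s * fv s (v t) := by
    rw [← intervalIntegral.integral_neg]
    exact intervalIntegral.integral_nonneg ht fun s hs =>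
      neg_nonneg.2 (mul_nonpos_of_nonneg_of_nonpos (ht₀.trans hs.1) (hfv_nonpos s hs.1 (v t)))
  have hfv_term := mul_nonneg (by positivity : 0 ≤ u t ^ 2 / t ^ 2) hfv_int
  unfold lyapunovDeriv
  linarith

end Lyapunov

theorem lyapunov_nonincreasing_first_general
    (t₀ : ℝ) (ht₀ : 1 ≤ t₀) (f fv : ℝ → ℝ → ℝ)
    (hf_cont : ContinuousOn (fun p : ℝ × ℝ => f p.1 p.2) (Set.Ici t₀ ×ˢ Set.univ))
    (hfv : ∀ t ∈ Set.Ici t₀, ∀ w : ℝ, HasDerivAt (f t) (fv t w) w)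
    (hfv_cont : ContinuousOn (fun p : ℝ × ℝ => fv p.1 p.2) (Set.Ici t₀ ×ˢ Set.univ))
    (hsign : ∀ t ∈ Set.Ici t₀, ∀ w : ℝ, w * f t w ≤ 0)
    (hfv_nonpos : ∀ t ∈ Set.Ici t₀, ∀ w : ℝ, fv t w ≤ 0)
    (Tinf : EReal)
    (u v : ℝ → ℝ)
    (hu : ∀ t : ℝ, t₀ ≤ t → (t : EReal) < Tinf → HasDerivAt u (-(t * f t (v t))) t)
    (hv : ∀ t : ℝ, t₀ ≤ t → (t : EReal) < Tinf → HasDerivAt v (u t / t ^ 2) t) :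
    (∀ t : ℝ, t₀ ≤ t → (t : EReal) < Tinf →
      HasDerivWithinAt (fun τ => u τ ^ 2 / 2 + u τ * ∫ s in t₀..τ, s * f s (v τ))
        (-(t * f t (v t)) * (∫ s in t₀..t, s * f s (v t)) +
          u t ^ 2 / t ^ 2 * ∫ s in t₀..t, s * fv s (v t))
        {r : ℝ | t₀ ≤ r ∧ (r : EReal) < Tinf} t ∧
      -(t * f t (v t)) * (∫ s in t₀..t, s * f s (v t)) +
          u t ^ 2 / t ^ 2 * (∫ s in t₀..t, s * fv s (v t)) ≤ 0) ∧
    AntitoneOn (fun τ => u τ ^ 2 / 2 + u τ * ∫ s in t₀..τ, s * f s (v τ))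
      {r : ℝ | t₀ ≤ r ∧ (r : EReal) < Tinf} := by
  set S := {r : ℝ | t₀ ≤ r ∧ (r : EReal) < Tinf}
  have hderiv : ∀ t ∈ S, HasDerivWithinAt (lyapunov t₀ f u v) (lyapunovDeriv t₀ f fv u v t) S t ∧
      lyapunovDeriv t₀ f fv u v t ≤ 0 := fun t ⟨ht, hlt⟩ =>
    ⟨hasDerivWithinAt_lyapunov hf_cont hfv hfv_cont (fun _ hr => hr.1) ht (hu t ht hlt)
      (hv t ht hlt),
    lyapunovDeriv_nonpos (by linarith) (fun t ht => (hfv t ht 0).continuousAt) hsign hfv_nonpos ht⟩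
  have hS : Convex ℝ S := OrdConnected.convex ⟨fun x hx y hy z hz =>
    ⟨hx.1.trans hz.1, (EReal.coe_le_coe_iff.2 hz.2).trans_lt hy.2⟩⟩
  refine ⟨fun t ht hlt => hderiv t ⟨ht, hlt⟩, antitoneOn_of_hasDerivWithinAt_nonpos hS
    (fun t ht => (hderiv t ht).1.continuousWithinAt)
    (fun t ht => (hderiv t (interior_subset ht)).1.mono interior_subset)
    (fun t ht => (hderiv t (interior_subset ht)).2)⟩

/-- The Lyapunov function `V(t) = u(t)²/2 + u(t)·∫_{t₀}^{t} s f(s, v(t)) ds` along a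
solution `(u, v)` of the system `u′ = −t f(t,v)`, `v′ = u/t²` is nonincreasing on
`[t₀, T)` when `v·f(t,v) ≤ 0` and `∂f/∂v ≤ 0`; indeed its derivative equals
`−t f(t,v(t))·∫_{t₀}^{t} s f(s,v(t)) ds + (u(t)²/t²)·∫_{t₀}^{t} s ∂f/∂v(s,v(t)) ds ≤ 0`. -/
theorem lyapunov_nonincreasing_first
    (t₀ : ℝ) (ht₀ : 1 ≤ t₀) (f fv : ℝ → ℝ → ℝ)
    (hf_cont : ContinuousOn (fun p : ℝ × ℝ => f p.1 p.2) (Set.Ici t₀ ×ˢ Set.univ))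
    (hfv : ∀ t ∈ Set.Ici t₀, ∀ w : ℝ, HasDerivAt (f t) (fv t w) w)
    (hfv_cont : ContinuousOn (fun p : ℝ × ℝ => fv p.1 p.2) (Set.Ici t₀ ×ˢ Set.univ))
    (hsign : ∀ t ∈ Set.Ici t₀, ∀ w : ℝ, w * f t w ≤ 0)
    (hfv_nonpos : ∀ t ∈ Set.Ici t₀, ∀ w : ℝ, fv t w ≤ 0)
    (Tinf : EReal) (hT : (t₀ : EReal) < Tinf)
    (u v : ℝ → ℝ)
    (hu : ∀ t : ℝ, t₀ ≤ t → (t : EReal) < Tinf → HasDerivAt u (-(t * f t (v t))) t)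
    (hv : ∀ t : ℝ, t₀ ≤ t → (t : EReal) < Tinf → HasDerivAt v (u t / t ^ 2) t) :
    (∀ t : ℝ, t₀ ≤ t → (t : EReal) < Tinf →
      HasDerivWithinAt (fun τ => u τ ^ 2 / 2 + u τ * ∫ s in t₀..τ, s * f s (v τ))
        (-(t * f t (v t)) * (∫ s in t₀..t, s * f s (v t)) +
          u t ^ 2 / t ^ 2 * ∫ s in t₀..t, s * fv s (v t))
        {r : ℝ | t₀ ≤ r ∧ (r : EReal) < Tinf} t ∧
      -(t * f t (v t)) * (∫ s in t₀..t, s * f s (v t)) +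
          u t ^ 2 / t ^ 2 * (∫ s in t₀..t, s * fv s (v t)) ≤ 0) ∧
    AntitoneOn (fun τ => u τ ^ 2 / 2 + u τ * ∫ s in t₀..τ, s * f s (v τ))
      {r : ℝ | t₀ ≤ r ∧ (r : EReal) < Tinf} :=
  lyapunov_nonincreasing_first_general t₀ ht₀ f fv hf_cont hfv hfv_cont hsign hfv_nonpos Tinf u v hu
    hv
end

section
/- Let f : [t₀,∞) × ℝ → ℝ (t₀ ≥ 1) be continuous with continuous partial derivative ∂f/∂t, and assume v·f(t,v) ≥ 0 and v·[3f(t,v) + t·(∂f/∂t)(t,v)] ≤ 0 for all t ≥ t₀ and all v ≠ 0. Then for any solution (u,v) of the system u′ = −t f(t,v), v′ = u/t² on [t₀,T), one has |u(t)| ≤ √(2V₀) for all t ∈ [t₀,T), where V₀ = u(t₀)²/2 + t₀³·∫_{0}^{v(t₀)} f(t₀,s) ds. -/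
/-!
Along a solution, `V(t) = u²/2 + t³ ∫₀^{v(t)} f(t,s) ds` has derivative
`t² ∫₀^{v(t)} (3 f + t ∂f/∂t)(t,s) ds`: the terms `-t u f(t,v)` from `u²/2` and `t³ f(t,v) · u/t²`
from the moving endpoint cancel. The second sign condition makes this nonpositive, and the first
one gives `u(t)²/2 ≤ V(t) ≤ V(t₀)`. The moving-endpoint derivative comes from the continuity of both
partial derivatives of `(t, w) ↦ ∫₀^w f(t,s) ds`.
-/

open Filter Set MeasureTheory intervalIntegral Topology

theorem integral_zero_nonneg_of_forall_mul_nonneg {g : ℝ → ℝ} (b : ℝ)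
    (hg : ∀ s, s ≠ 0 → 0 ≤ s * g s) : 0 ≤ ∫ s in (0 : ℝ)..b, g s := by
  rcases le_total 0 b with hb | hb
  · rw [integral_of_le hb, integral_Ioc_eq_integral_Ioo]
    refine setIntegral_nonneg measurableSet_Ioo fun s hs => ?_
    exact nonneg_of_mul_nonneg_right (hg s hs.1.ne') hs.1
  · rw [integral_of_ge hb, integral_Ioc_eq_integral_Ioo, neg_nonneg]
    refine setIntegral_nonpos measurableSet_Ioo fun s hs => ?_
    exact nonpos_of_mul_nonneg_right (hg s hs.2.ne) hs.2

theorem integral_zero_nonpos_of_forall_mul_nonpos {g : ℝ → ℝ} (b : ℝ)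
    (hg : ∀ s, s ≠ 0 → s * g s ≤ 0) : ∫ s in (0 : ℝ)..b, g s ≤ 0 := by
  have := integral_zero_nonneg_of_forall_mul_nonneg (g := fun s => -g s) b fun s hs => by
    simpa only [mul_neg, neg_nonneg] using hg s hs
  rwa [intervalIntegral.integral_neg, neg_nonneg] at this

section Parametric

variable {X : Type*} [TopologicalSpace X] {f : X → ℝ → ℝ} {S : Set X}

theorem ContinuousOn.continuous_of_prod_univ (hf : ContinuousOn (Function.uncurry f) (S ×ˢ univ))
    {x : X} (hx : x ∈ S) : Continuous (f x) :=
  continuousOn_univ.mp <| hf.comp (Continuous.prodMk_right x).continuousOn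
    fun _ _ => ⟨hx, trivial⟩

theorem ContinuousOn.primitive_of_prod_univ (hf : ContinuousOn (Function.uncurry f) (S ×ˢ univ))
    (a : ℝ) : ContinuousOn (fun p : X × ℝ => ∫ s in a..p.2, f p.1 s) (S ×ˢ univ) := by
  have hf' : Continuous (Function.uncurry fun (x : S) (s : ℝ) => f x s) :=
    hf.comp_continuous (continuous_subtype_val.prodMap continuous_id) fun p => ⟨p.1.2, trivial⟩
  have := (continuous_parametric_primitive_of_continuous (μ := volume) (a₀ := a) hf').comp
    ((continuous_id.prodMap continuous_subtype_val).comp (Homeomorph.Set.prod S univ).continuous)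
  exact continuousOn_iff_continuous_domRestrict.mpr this

end Parametric

section Leibniz

variable {f ft : ℝ → ℝ → ℝ} {U : Set ℝ}

theorem hasDerivAt_intervalIntegral_param (hU : IsOpen U)
    (hf : ContinuousOn (Function.uncurry f) (U ×ˢ univ))
    (hft : ∀ w, ∀ t ∈ U, HasDerivAt (f · w) (ft t w) t)
    (hft_cont : ContinuousOn (Function.uncurry ft) (U ×ˢ univ)) {x : ℝ} (hx : x ∈ U) (a b : ℝ) :
    HasDerivAt (fun τ => ∫ s in a..b, f τ s) (∫ s in a..b, ft x s) x := by
  obtain ⟨ε, hε, hεU⟩ := Metric.nhds_basis_closedBall.mem_iff.mp (hU.mem_nhds hx)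
  obtain ⟨M, hM⟩ := ((isCompact_closedBall x ε).prod isCompact_uIcc).exists_bound_of_continuousOn
    (hft_cont.mono (prod_mono hεU (subset_univ (uIcc a b))))
  have hball : Metric.ball x ε ⊆ U := Metric.ball_subset_closedBall.trans hεU
  refine (hasDerivAt_integral_of_dominated_loc_of_deriv_le (bound := fun _ => M)
    (Metric.ball_mem_nhds x hε) ?_ ((hf.continuous_of_prod_univ hx).intervalIntegrable a b)
    (hft_cont.continuous_of_prod_univ hx).aestronglyMeasurable ?_ intervalIntegrable_const
    ?_).2
  · filter_upwards [hU.mem_nhds hx] with τ hτ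
    exact (hf.continuous_of_prod_univ hτ).aestronglyMeasurable
  · refine ae_of_all _ fun s hs τ hτ => hM (τ, s) ⟨?_, uIoc_subset_uIcc hs⟩
    exact Metric.ball_subset_closedBall hτ
  · exact ae_of_all _ fun s _ τ hτ => hft s τ (hball hτ)

open ContinuousLinearMap in
theorem hasDerivAt_intervalIntegral_param_comp (hU : IsOpen U)
    (hf : ContinuousOn (Function.uncurry f) (U ×ˢ univ))
    (hft : ∀ w, ∀ t ∈ U, HasDerivAt (f · w) (ft t w) t)
    (hft_cont : ContinuousOn (Function.uncurry ft) (U ×ˢ univ)) {v : ℝ → ℝ} {v' x : ℝ}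
    (hx : x ∈ U) (hv : HasDerivAt v v' x) (a : ℝ) :
    HasDerivAt (fun τ => ∫ s in a..v τ, f τ s) ((∫ s in a..v x, ft x s) + f x (v x) * v') x := by
  have hxU : U ×ˢ univ ∈ 𝓝 (x, v x) := prod_mem_nhds (hU.mem_nhds hx) univ_mem
  have hcont {g : ℝ × ℝ → ℝ} (hg : ContinuousOn g (U ×ˢ univ)) :
      ContinuousAt (fun p => smulRight (1 : ℝ →L[ℝ] ℝ) (g p)) (x, v x) :=
    (smulRightL ℝ ℝ ℝ 1).continuous.continuousAt.comp (hg.continuousAt hxU)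
  have hΦ := hasStrictFDerivAt_uncurry_coprod (u := (x, v x))
    (f := fun τ w => ∫ s in a..w, f τ s)
    (f₁ := fun τ w => smulRight (1 : ℝ →L[ℝ] ℝ) (∫ s in a..w, ft τ s))
    (f₂ := fun τ w => smulRight (1 : ℝ →L[ℝ] ℝ) (f τ w))
    (by filter_upwards [hxU] with p hp
        exact hasDerivAt_intervalIntegral_param hU hf hft hft_cont hp.1 a p.2)
    (by filter_upwards [hxU] with p hp
        exact ((hf.continuous_of_prod_univ hp.1).integral_hasStrictDerivAt a p.2).hasDerivAt)
    (hcont (hft_cont.primitive_of_prod_univ a)) (hcont hf)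
  refine (hΦ.hasFDerivAt.comp_hasDerivAt x ((hasDerivAt_id x).prodMk hv)).congr_deriv ?_
  simp [Function.HasUncurry.uncurry, mul_comm]

end Leibniz

noncomputable def secondLyapunov (f : ℝ → ℝ → ℝ) (u v : ℝ → ℝ) (t : ℝ) : ℝ :=
  u t ^ 2 / 2 + t ^ 3 * ∫ s in (0 : ℝ)..v t, f t s

section Lyapunov

variable {f ft : ℝ → ℝ → ℝ} {u v : ℝ → ℝ}

theorem continuousWithinAt_secondLyapunov {S : Set ℝ} {x : ℝ}
    (hf : ContinuousOn (Function.uncurry f) (S ×ˢ univ)) (hx : x ∈ S)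
    (hu : ContinuousWithinAt u S x) (hv : ContinuousWithinAt v S x) :
    ContinuousWithinAt (secondLyapunov f u v) S x := by
  have hG : ContinuousWithinAt (fun τ => ∫ s in (0 : ℝ)..v τ, f τ s) S x :=
    ((hf.primitive_of_prod_univ 0) (x, v x) ⟨hx, trivial⟩).comp (f := fun τ => (τ, v τ))
      (continuousWithinAt_id.prodMk hv) fun _ hτ => ⟨hτ, trivial⟩
  exact ((hu.pow 2).div_const 2).add ((continuousWithinAt_id.pow 3).mul hG)

theorem hasDerivAt_secondLyapunov {U : Set ℝ} (hU : IsOpen U)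
    (hf : ContinuousOn (Function.uncurry f) (U ×ˢ univ))
    (hft : ∀ w, ∀ t ∈ U, HasDerivAt (f · w) (ft t w) t)
    (hft_cont : ContinuousOn (Function.uncurry ft) (U ×ˢ univ)) {x : ℝ} (hx : x ∈ U)
    (hx0 : x ≠ 0) (hu : HasDerivAt u (-(x * f x (v x))) x)
    (hv : HasDerivAt v (u x / x ^ 2) x) :
    HasDerivAt (secondLyapunov f u v)
      (x ^ 2 * ∫ s in (0 : ℝ)..v x, (3 * f x s + x * ft x s)) x := by
  have hG := hasDerivAt_intervalIntegral_param_comp hU hf hft hft_cont hx hv 0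
  refine (((hu.pow 2).div_const 2).add ((hasDerivAt_pow 3 x).mul hG)).congr_deriv ?_
  rw [intervalIntegral.integral_add, intervalIntegral.integral_const_mul,
    intervalIntegral.integral_const_mul]
  · field_simp
    ring
  · exact ((hf.continuous_of_prod_univ hx).const_mul 3).intervalIntegrable _ _
  · exact ((hft_cont.continuous_of_prod_univ hx).const_mul x).intervalIntegrable _ _

end Lyapunov

theorem le_of_hasDerivAt_nonpos {V V' : ℝ → ℝ} {a b : ℝ} (hab : a ≤ b)
    (hc : ContinuousWithinAt V (Ici a) a) (hd : ∀ x ∈ Ioc a b, HasDerivAt V (V' x) x)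
    (hV' : ∀ x ∈ Ioc a b, V' x ≤ 0) : V b ≤ V a := by
  refine antitoneOn_of_hasDerivWithinAt_nonpos (f' := V') (convex_Icc a b) (fun x hx => ?_)
    (fun x hx => ?_) (fun x hx => ?_) (left_mem_Icc.mpr hab) (right_mem_Icc.mpr hab) hab
  · rcases hx.1.eq_or_lt with rfl | hax
    · exact hc.mono Icc_subset_Ici_self
    · exact (hd x ⟨hax, hx.2⟩).continuousAt.continuousWithinAt
  · rw [interior_Icc] at hx
    exact (hd x (Ioo_subset_Ioc_self hx)).hasDerivWithinAt
  · rw [interior_Icc] at hx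
    exact hV' x (Ioo_subset_Ioc_self hx)

theorem u_bounded_via_second_lyapunov_general
    (t₀ : ℝ) (ht₀ : 1 ≤ t₀) (f ft : ℝ → ℝ → ℝ)
    (hf_cont : ContinuousOn (fun p : ℝ × ℝ => f p.1 p.2) (Set.Ici t₀ ×ˢ Set.univ))
    (hft : ∀ w : ℝ, ∀ t ∈ Set.Ici t₀,
      HasDerivWithinAt (fun s => f s w) (ft t w) (Set.Ici t₀) t)
    (hft_cont : ContinuousOn (fun p : ℝ × ℝ => ft p.1 p.2) (Set.Ici t₀ ×ˢ Set.univ))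
    (hsign : ∀ t ∈ Set.Ici t₀, ∀ w : ℝ, w ≠ 0 → 0 ≤ w * f t w)
    (hsign' : ∀ t ∈ Set.Ici t₀, ∀ w : ℝ, w ≠ 0 → w * (3 * f t w + t * ft t w) ≤ 0)
    (Tinf : EReal)
    (u v : ℝ → ℝ)
    (hu : ∀ t : ℝ, t₀ ≤ t → (t : EReal) < Tinf → HasDerivAt u (-(t * f t (v t))) t)
    (hv : ∀ t : ℝ, t₀ ≤ t → (t : EReal) < Tinf → HasDerivAt v (u t / t ^ 2) t) :
    ∀ t : ℝ, t₀ ≤ t → (t : EReal) < Tinf →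
      |u t| ≤ Real.sqrt (2 * (u t₀ ^ 2 / 2 + t₀ ^ 3 * ∫ s in (0 : ℝ)..(v t₀), f t₀ s)) := by
  intro t ht htT
  have hsub : Ioi t₀ ×ˢ (univ : Set ℝ) ⊆ Ici t₀ ×ˢ univ := prod_mono Ioi_subset_Ici_self le_rfl
  have hft' : ∀ w, ∀ x ∈ Ioi t₀, HasDerivAt (f · w) (ft x w) x := fun w x hx =>
    (hft w x (mem_Ici_of_Ioi hx)).hasDerivAt (Ici_mem_nhds hx)
  have hdom : ∀ x ∈ Icc t₀ t, (x : EReal) < Tinf := fun x hx =>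
    (EReal.coe_le_coe_iff.mpr hx.2).trans_lt htT
  have hT₀ := hdom t₀ (left_mem_Icc.mpr ht)
  have hV : secondLyapunov f u v t ≤ secondLyapunov f u v t₀ := by
    refine le_of_hasDerivAt_nonpos
      (V' := fun x => x ^ 2 * ∫ s in (0 : ℝ)..v x, (3 * f x s + x * ft x s)) ht ?_
      (fun x hx => ?_) (fun x hx => ?_)
    · exact continuousWithinAt_secondLyapunov hf_cont self_mem_Ici
        (hu t₀ le_rfl hT₀).continuousAt.continuousWithinAt
        (hv t₀ le_rfl hT₀).continuousAt.continuousWithinAt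
    · exact hasDerivAt_secondLyapunov isOpen_Ioi (hf_cont.mono hsub) hft' (hft_cont.mono hsub)
        hx.1 (by linarith [hx.1]) (hu x hx.1.le (hdom x (Ioc_subset_Icc_self hx)))
        (hv x hx.1.le (hdom x (Ioc_subset_Icc_self hx)))
    · exact mul_nonpos_of_nonneg_of_nonpos (sq_nonneg x)
        (integral_zero_nonpos_of_forall_mul_nonpos _ (hsign' x (mem_Ici_of_Ioi hx.1)))
  have hI : 0 ≤ t ^ 3 * ∫ s in (0 : ℝ)..v t, f t s :=
    mul_nonneg (pow_nonneg (by linarith) 3)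
      (integral_zero_nonneg_of_forall_mul_nonneg _ (hsign t ht))
  exact Real.abs_le_sqrt (by unfold secondLyapunov at hV; linarith)

/-- Under `v·f(t,v) ≥ 0` and `v·[3f(t,v) + t·∂f/∂t(t,v)] ≤ 0` (for `v ≠ 0`),
any solution `(u, v)` of the system `u′ = −t f(t,v)`, `v′ = u/t²` on `[t₀, T)` satisfies
`|u(t)| ≤ √(2V₀)` with `V₀ = u(t₀)²/2 + t₀³·∫_0^{v(t₀)} f(t₀, s) ds`. -/
theorem u_bounded_via_second_lyapunov
    (t₀ : ℝ) (ht₀ : 1 ≤ t₀) (f ft : ℝ → ℝ → ℝ)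
    (hf_cont : ContinuousOn (fun p : ℝ × ℝ => f p.1 p.2) (Set.Ici t₀ ×ˢ Set.univ))
    (hft : ∀ w : ℝ, ∀ t ∈ Set.Ici t₀,
      HasDerivWithinAt (fun s => f s w) (ft t w) (Set.Ici t₀) t)
    (hft_cont : ContinuousOn (fun p : ℝ × ℝ => ft p.1 p.2) (Set.Ici t₀ ×ˢ Set.univ))
    (hsign : ∀ t ∈ Set.Ici t₀, ∀ w : ℝ, w ≠ 0 → 0 ≤ w * f t w)
    (hsign' : ∀ t ∈ Set.Ici t₀, ∀ w : ℝ, w ≠ 0 → w * (3 * f t w + t * ft t w) ≤ 0)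
    (Tinf : EReal) (hT : (t₀ : EReal) < Tinf)
    (u v : ℝ → ℝ)
    (hu : ∀ t : ℝ, t₀ ≤ t → (t : EReal) < Tinf → HasDerivAt u (-(t * f t (v t))) t)
    (hv : ∀ t : ℝ, t₀ ≤ t → (t : EReal) < Tinf → HasDerivAt v (u t / t ^ 2) t) :
    ∀ t : ℝ, t₀ ≤ t → (t : EReal) < Tinf →
      |u t| ≤ Real.sqrt (2 * (u t₀ ^ 2 / 2 + t₀ ^ 3 * ∫ s in (0 : ℝ)..(v t₀), f t₀ s)) :=
  u_bounded_via_second_lyapunov_general t₀ ht₀ f ft hf_cont hft hft_cont hsign hsign' Tinf u v hu hv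
end

section
/- Under the hypotheses of the main boundedness theorem — f : [t₀,∞) × ℝ → ℝ continuous with continuous ∂f/∂v, v·f(t,v) ≤ 0, ∂f/∂v(t,v) ≤ 0, |f(t,v)| ≤ a(t)g(|v|) with a ≥ 0 continuous, g : [0,∞) → [0,∞) continuous nondecreasing and positive on (0,∞), K = ∫_{t₀}^{∞} t a(t) dt < ∞, ∫_{1}^{∞} dξ/g(ξ) < ∞ — every solution (u,v) of the system u′ = −t f(t,v), v′ = u/t² whose initial data satisfy (4/t₀)(K + c/g(1)) < ∫_{1+|v(t₀)|}^{∞} dξ/g(ξ), where c = 1 + u(t₀)²/2, has u bounded on its maximal interval of existence. -/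
/-!
Along a solution, `|v| ≤ z` for the comparison function
`z(t) = 1 + |v(t₀)| + ∫_{t₀}^t |u(s)|/s² ds`, so integrating `u′ = -t f(t, v)` against
`|f(t, v)| ≤ a(t) g(|v|)`, with `z` and `g` nondecreasing, gives
`|u| ≤ |u(t₀)| + K g(z) ≤ M g(z)` where `M = K + |u(t₀)|/g(1)`. Hence `z′ = |u|/t² ≤ M g(z)/t²`,
and Bihari's inequality bounds `∫_{z(t₀)}^{z(t)} dξ/g(ξ)` by `M/t₀`. The initial condition puts
`M/t₀` below `∫_{z(t₀)}^∞ dξ/g(ξ)`, so `z` stays below a fixed `Z` and `|u| ≤ |u(t₀)| + K g(Z)`.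
-/

open Filter Set MeasureTheory

theorem ContinuousOn.hasDerivAt_intervalIntegral {E : Type*} [NormedAddCommGroup E]
    [NormedSpace ℝ E] [CompleteSpace E] {f : ℝ → E} {s : Set ℝ} {a b : ℝ}
    (hf : ContinuousOn f s) (hs : IsOpen s) (hb : b ∈ s)
    (hab : IntervalIntegrable f volume a b) :
    HasDerivAt (fun x => ∫ y in a..x, f y) (f b) b :=
  intervalIntegral.integral_hasDerivAt_right hab (hf.stronglyMeasurableAtFilter hs b hb)
    (hf.continuousAt (hs.mem_nhds hb))

theorem exists_lt_intervalIntegral_of_lt_integral_Ici {f : ℝ → ℝ} {a c : ℝ}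
    (hf : IntegrableOn f (Ici a)) (hc : c < ∫ x in Ici a, f x) :
    ∃ b, a ≤ b ∧ c < ∫ x in a..b, f x := by
  rw [integral_Ici_eq_integral_Ioi] at hc
  have hlim := intervalIntegral_tendsto_integral_Ioi a (hf.mono_set Ioi_subset_Ici_self)
    tendsto_id
  exact ((eventually_ge_atTop a).and (hlim.eventually (eventually_gt_nhds hc))).exists

theorem integral_one_div_le_sub_of_hasDerivAt_le_mul {g z z' H h : ℝ → ℝ} {a b : ℝ}
    (hab : a ≤ b) (hg : ContinuousOn g (Ioi 0)) (hg_pos : ∀ y, 0 < y → 0 < g y)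
    (hz : ContinuousOn z (Icc a b)) (hz_pos : ∀ t ∈ Icc a b, 0 < z t)
    (hz' : ∀ t ∈ Ioo a b, HasDerivAt z (z' t) t)
    (hH : ContinuousOn H (Icc a b)) (hH' : ∀ t ∈ Ioo a b, HasDerivAt H (h t) t)
    (hle : ∀ t ∈ Ioo a b, z' t ≤ h t * g (z t)) :
    ∫ y in z a..z b, 1 / g y ≤ H b - H a := by
  have hG : ∀ y, 0 < y → HasDerivAt (fun x => ∫ ξ in z a..x, 1 / g ξ) (1 / g y) y := by
    have hcont : ContinuousOn (fun ξ => 1 / g ξ) (Ioi 0) :=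
      continuousOn_const.div hg fun ξ hξ => (hg_pos ξ hξ).ne'
    intro y hy
    refine hcont.hasDerivAt_intervalIntegral isOpen_Ioi hy (ContinuousOn.intervalIntegrable ?_)
    exact hcont.mono (ordConnected_Ioi.uIcc_subset (hz_pos a ⟨le_rfl, hab⟩) hy)
  -- `t ↦ H t - G (z t)`, with `G` a primitive of `1 / g`, has nonnegative derivative.
  have hmono : MonotoneOn (fun t => H t - ∫ ξ in z a..z t, 1 / g ξ) (Icc a b) := by
    refine monotoneOn_of_hasDerivWithinAt_nonneg (f' := fun t => h t - 1 / g (z t) * z' t)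
      (convex_Icc a b) ?_ ?_ ?_
    · exact hH.sub fun t ht =>
        (hG _ (hz_pos t ht)).continuousAt.comp_continuousWithinAt (hz t ht)
    · rw [interior_Icc]
      intro t ht
      exact ((hH' t ht).sub ((hG _ (hz_pos t (Ioo_subset_Icc_self ht))).comp t
        (hz' t ht))).hasDerivWithinAt
    · rw [interior_Icc]
      intro t ht
      have hgz := hg_pos _ (hz_pos t (Ioo_subset_Icc_self ht))
      rw [sub_nonneg, one_div_mul_eq_div, div_le_iff₀ hgz]
      exact hle t ht
  have := hmono ⟨le_rfl, hab⟩ ⟨hab, le_rfl⟩ hab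
  simp only [intervalIntegral.integral_same, sub_zero] at this
  linarith

noncomputable def comparison (t₀ : ℝ) (u v : ℝ → ℝ) (t : ℝ) : ℝ :=
  1 + |v t₀| + ∫ s in t₀..t, |u s| / s ^ 2

section Comparison

variable {t₀ T : ℝ} {u v : ℝ → ℝ}

theorem continuousOn_abs_div_sq (ht₀ : 0 < t₀) (hu : ContinuousOn u (Icc t₀ T)) :
    ContinuousOn (fun s => |u s| / s ^ 2) (Icc t₀ T) :=
  hu.abs.div (continuousOn_pow 2) fun _ hs => pow_ne_zero 2 (ht₀.trans_le hs.1).ne'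

theorem continuousOn_comparison (ht₀ : 0 < t₀) (hT : t₀ ≤ T)
    (hu : ContinuousOn u (Icc t₀ T)) :
    ContinuousOn (comparison t₀ u v) (Icc t₀ T) := by
  have hint : IntegrableOn (fun s => |u s| / s ^ 2) (uIcc t₀ T) := by
    rw [uIcc_of_le hT]
    exact (continuousOn_abs_div_sq ht₀ hu).integrableOn_Icc
  have := intervalIntegral.continuousOn_primitive_interval hint
  rw [uIcc_of_le hT] at this
  exact continuousOn_const.add this

theorem hasDerivAt_comparison (ht₀ : 0 < t₀) (hu : ContinuousOn u (Icc t₀ T)) {t : ℝ}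
    (ht : t ∈ Ioo t₀ T) : HasDerivAt (comparison t₀ u v) (|u t| / t ^ 2) t := by
  have hq := continuousOn_abs_div_sq ht₀ hu
  exact ((hq.mono Ioo_subset_Icc_self).hasDerivAt_intervalIntegral isOpen_Ioo ht
    ((hq.mono (Icc_subset_Icc_right ht.2.le)).intervalIntegrable_of_Icc ht.1.le)).const_add
    _

theorem monotoneOn_comparison (ht₀ : 0 < t₀) (hT : t₀ ≤ T)
    (hu : ContinuousOn u (Icc t₀ T)) :
    MonotoneOn (comparison t₀ u v) (Icc t₀ T) :=
  monotoneOn_of_hasDerivWithinAt_nonneg (convex_Icc _ _) (continuousOn_comparison ht₀ hT hu)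
    (fun _ ht => (hasDerivAt_comparison ht₀ hu (by rwa [interior_Icc] at ht)).hasDerivWithinAt)
    (fun _ _ => by positivity)

theorem comparison_self : comparison t₀ u v t₀ = 1 + |v t₀| := by
  simp [comparison]

theorem one_le_comparison (ht₀ : 0 < t₀) (hu : ContinuousOn u (Icc t₀ T)) {t : ℝ}
    (ht : t ∈ Icc t₀ T) : 1 ≤ comparison t₀ u v t := by
  have hT := ht.1.trans ht.2
  have := monotoneOn_comparison (v := v) ht₀ hT hu ⟨le_rfl, hT⟩ ht ht.1
  linarith [abs_nonneg (v t₀), comparison_self (t₀ := t₀) (u := u) (v := v)]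

theorem abs_le_comparison (ht₀ : 0 < t₀) (hu : ContinuousOn u (Icc t₀ T))
    (hv : ∀ t ∈ Icc t₀ T, HasDerivAt v (u t / t ^ 2) t) {t : ℝ} (ht : t ∈ Icc t₀ T) :
    |v t| ≤ comparison t₀ u v t := by
  have hsub : Icc t₀ t ⊆ Icc t₀ T := Icc_subset_Icc_right ht.2
  have hdisp := norm_sub_le_integral_of_norm_deriv_le_of_le (f := v) ht.1
    (fun s hs => (hv s (hsub hs)).continuousAt.continuousWithinAt)
    (fun s hs =>
      (hv s (hsub (Ioo_subset_Icc_self hs))).differentiableAt.differentiableWithinAt)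
    (ae_of_all _ fun s hs => by
      rw [(hv s (hsub (Ioo_subset_Icc_self hs))).deriv, Real.norm_eq_abs, abs_div,
        abs_of_nonneg (sq_nonneg s)])
    (((continuousOn_abs_div_sq ht₀ hu).mono hsub).intervalIntegrable_of_Icc ht.1)
  rw [Real.norm_eq_abs] at hdisp
  unfold comparison
  linarith [abs_sub_abs_le_abs_sub (v t) (v t₀)]

end Comparison

section System

variable {t₀ T : ℝ} {f : ℝ → ℝ → ℝ} {a g u v : ℝ → ℝ}

theorem abs_le_add_mul_comparison (ht₀ : 0 < t₀) (ha_nonneg : ∀ t ∈ Ici t₀, 0 ≤ a t)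
    (hg_pos : ∀ s : ℝ, 0 < s → 0 < g s) (hg_mono : MonotoneOn g (Ici 0))
    (hfg : ∀ t ∈ Ici t₀, ∀ w : ℝ, |f t w| ≤ a t * g |w|)
    (hK : IntegrableOn (fun t => t * a t) (Ici t₀))
    (hu : ∀ t ∈ Icc t₀ T, HasDerivAt u (-(t * f t (v t))) t)
    (hv : ∀ t ∈ Icc t₀ T, HasDerivAt v (u t / t ^ 2) t) {t : ℝ} (ht : t ∈ Icc t₀ T) :
    |u t| ≤ |u t₀| + (∫ s in Ici t₀, s * a s) * g (comparison t₀ u v t) := by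
  have hu_cont : ContinuousOn u (Icc t₀ T) := fun s hs =>
    (hu s hs).continuousAt.continuousWithinAt
  have hsub : Icc t₀ t ⊆ Icc t₀ T := Icc_subset_Icc_right ht.2
  have hz_one := one_le_comparison (v := v) ht₀ hu_cont ht
  have hderiv_le :
      ∀ s ∈ Ioo t₀ t, ‖deriv u s‖ ≤ s * a s * g (comparison t₀ u v t) := by
    intro s hs
    have hs' := hsub (Ioo_subset_Icc_self hs)
    have hvs : |v s| ≤ comparison t₀ u v t :=
      (abs_le_comparison ht₀ hu_cont hv hs').trans
        (monotoneOn_comparison ht₀ (ht.1.trans ht.2) hu_cont hs' ht hs.2.le)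
    have hgv : g |v s| ≤ g (comparison t₀ u v t) :=
      hg_mono (mem_Ici.2 (abs_nonneg _)) (mem_Ici.2 (zero_le_one.trans hz_one)) hvs
    rw [(hu s hs').deriv, Real.norm_eq_abs, abs_neg, abs_mul, abs_of_pos (ht₀.trans hs.1),
      mul_assoc]
    exact mul_le_mul_of_nonneg_left
      ((hfg s hs'.1 (v s)).trans (mul_le_mul_of_nonneg_left hgv (ha_nonneg s hs'.1)))
      (ht₀.trans hs.1).le
  have hdisp := norm_sub_le_integral_of_norm_deriv_le_of_le ht.1 (hu_cont.mono hsub)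
    (fun s hs =>
      (hu s (hsub (Ioo_subset_Icc_self hs))).differentiableAt.differentiableWithinAt)
    (ae_of_all _ hderiv_le)
    ((intervalIntegrable_iff_integrableOn_Icc_of_le ht.1).2
      ((hK.mono_set Icc_subset_Ici_self).mul_const _))
  have hint_le : ∫ s in t₀..t, s * a s ≤ ∫ s in Ici t₀, s * a s := by
    rw [intervalIntegral.integral_of_le ht.1]
    exact setIntegral_mono_set hK
      (ae_restrict_of_forall_mem measurableSet_Ici fun s hs =>
        mul_nonneg (ht₀.le.trans hs) (ha_nonneg s hs))
      (Ioc_subset_Ioi_self.trans Ioi_subset_Ici_self : Ioc t₀ t ≤ Ici t₀).eventuallyLE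
  rw [intervalIntegral.integral_mul_const, Real.norm_eq_abs] at hdisp
  have hg_nonneg := (hg_pos _ (zero_lt_one.trans_le hz_one)).le
  calc |u t| ≤ |u t₀| + |u t - u t₀| := by linarith [abs_sub_abs_le_abs_sub (u t) (u t₀)]
    _ ≤ |u t₀| + (∫ s in Ici t₀, s * a s) * g (comparison t₀ u v t) := by
      gcongr
      exact hdisp.trans (by gcongr)

theorem abs_le_mul_comparison (ht₀ : 0 < t₀) (ha_nonneg : ∀ t ∈ Ici t₀, 0 ≤ a t)
    (hg_pos : ∀ s : ℝ, 0 < s → 0 < g s) (hg_mono : MonotoneOn g (Ici 0))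
    (hfg : ∀ t ∈ Ici t₀, ∀ w : ℝ, |f t w| ≤ a t * g |w|)
    (hK : IntegrableOn (fun t => t * a t) (Ici t₀))
    (hu : ∀ t ∈ Icc t₀ T, HasDerivAt u (-(t * f t (v t))) t)
    (hv : ∀ t ∈ Icc t₀ T, HasDerivAt v (u t / t ^ 2) t) {t : ℝ} (ht : t ∈ Icc t₀ T) :
    |u t| ≤ ((∫ s in Ici t₀, s * a s) + |u t₀| / g 1) * g (comparison t₀ u v t) := by
  have hz_one := one_le_comparison (v := v) ht₀
    (fun s hs => (hu s hs).continuousAt.continuousWithinAt) ht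
  have hg_le : g 1 ≤ g (comparison t₀ u v t) :=
    hg_mono (mem_Ici.2 zero_le_one) (mem_Ici.2 (zero_le_one.trans hz_one)) hz_one
  have hu₀ : |u t₀| ≤ |u t₀| / g 1 * g (comparison t₀ u v t) := by
    rw [div_mul_eq_mul_div, le_div_iff₀ (hg_pos 1 one_pos)]
    gcongr
  have := abs_le_add_mul_comparison ht₀ ha_nonneg hg_pos hg_mono hfg hK hu hv ht
  linarith

theorem comparison_le_of_lt_integral (ht₀ : 0 < t₀) (hT : t₀ ≤ T)
    (ha_nonneg : ∀ t ∈ Ici t₀, 0 ≤ a t) (hg_cont : ContinuousOn g (Ioi 0))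
    (hg_pos : ∀ s : ℝ, 0 < s → 0 < g s) (hg_mono : MonotoneOn g (Ici 0))
    (hfg : ∀ t ∈ Ici t₀, ∀ w : ℝ, |f t w| ≤ a t * g |w|)
    (hK : IntegrableOn (fun t => t * a t) (Ici t₀))
    (hu : ∀ t ∈ Icc t₀ T, HasDerivAt u (-(t * f t (v t))) t)
    (hv : ∀ t ∈ Icc t₀ T, HasDerivAt v (u t / t ^ 2) t) {Z : ℝ} (hZ₀ : 1 + |v t₀| ≤ Z)
    (hZ : ((∫ s in Ici t₀, s * a s) + |u t₀| / g 1) / t₀ <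
      ∫ y in (1 + |v t₀|)..Z, 1 / g y) :
    comparison t₀ u v T ≤ Z := by
  set M := (∫ s in Ici t₀, s * a s) + |u t₀| / g 1
  have hu_cont : ContinuousOn u (Icc t₀ T) := fun s hs =>
    (hu s hs).continuousAt.continuousWithinAt
  have hM : 0 ≤ M := add_nonneg (setIntegral_nonneg measurableSet_Ici fun s hs =>
    mul_nonneg (ht₀.le.trans hs) (ha_nonneg s hs))
    (div_nonneg (abs_nonneg _) (hg_pos 1 one_pos).le)
  have hderiv_le : ∀ t ∈ Ioo t₀ T, |u t| / t ^ 2 ≤ M / t ^ 2 * g (comparison t₀ u v t) :=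
    fun t ht => by
      rw [div_mul_eq_mul_div]
      gcongr
      exact abs_le_mul_comparison ht₀ ha_nonneg hg_pos hg_mono hfg hK hu hv
        (Ioo_subset_Icc_self ht)
  have hbihari :
      ∫ y in comparison t₀ u v t₀..comparison t₀ u v T, 1 / g y ≤ M / t₀ - M / T := by
    have hH : ∀ t ∈ Ioo t₀ T, HasDerivAt (fun t => -M / t) (M / t ^ 2) t := fun t ht => by
      simpa [neg_div, div_eq_mul_inv] using
        (hasDerivAt_inv (ht₀.trans ht.1).ne').const_mul (-M)
    have := integral_one_div_le_sub_of_hasDerivAt_le_mul hT hg_cont hg_pos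
      (continuousOn_comparison ht₀ hT hu_cont)
      (fun t ht => zero_lt_one.trans_le (one_le_comparison ht₀ hu_cont ht))
      (fun t ht => hasDerivAt_comparison ht₀ hu_cont ht)
      (H := fun t => -M / t)
      (continuousOn_const.div continuousOn_id fun t ht => (ht₀.trans_le ht.1).ne')
      hH hderiv_le
    beta_reduce at this
    linarith [neg_div T M, neg_div t₀ M]
  rw [comparison_self] at hbihari
  by_contra! hZT
  have hz₀ : 0 < 1 + |v t₀| := by positivity
  have hg_inv : ContinuousOn (fun y => 1 / g y) (Icc (1 + |v t₀|) (comparison t₀ u v T)) :=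
    continuousOn_const.div (hg_cont.mono fun y hy => hz₀.trans_le hy.1)
      fun y hy => (hg_pos y (hz₀.trans_le hy.1)).ne'
  have hint_mono := intervalIntegral.integral_mono_interval (μ := volume) le_rfl hZ₀ hZT.le
    (ae_restrict_of_forall_mem measurableSet_Ioc fun y hy =>
      (one_div_pos.2 (hg_pos y (hz₀.trans hy.1))).le)
    (hg_inv.intervalIntegrable_of_Icc (hZ₀.trans hZT.le))
  have hMT : 0 ≤ M / T := div_nonneg hM (ht₀.le.trans hT)
  linarith

end System

theorem u_bounded_via_first_lyapunov_general
    (t₀ : ℝ) (ht₀ : 1 ≤ t₀) (f : ℝ → ℝ → ℝ)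
    (a g : ℝ → ℝ)
    (ha_nonneg : ∀ t ∈ Set.Ici t₀, 0 ≤ a t)
    (hg_cont : ContinuousOn g (Set.Ici 0))
    (hg_pos : ∀ s : ℝ, 0 < s → 0 < g s)
    (hg_mono : MonotoneOn g (Set.Ici 0))
    (hfg : ∀ t ∈ Set.Ici t₀, ∀ w : ℝ, |f t w| ≤ a t * g |w|)
    (hK : IntegrableOn (fun t => t * a t) (Set.Ici t₀))
    (hg_int : IntegrableOn (fun ξ => 1 / g ξ) (Set.Ici (1 : ℝ)))
    (Tinf : EReal)
    (u v : ℝ → ℝ)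
    (hu : ∀ t : ℝ, t₀ ≤ t → (t : EReal) < Tinf → HasDerivAt u (-(t * f t (v t))) t)
    (hv : ∀ t : ℝ, t₀ ≤ t → (t : EReal) < Tinf → HasDerivAt v (u t / t ^ 2) t)
    (hinit : 4 / t₀ * ((∫ t in Set.Ici t₀, t * a t) + (1 + u t₀ ^ 2 / 2) / g 1) <
      ∫ ξ in Set.Ici (1 + |v t₀|), 1 / g ξ) :
    ∃ U : ℝ, ∀ t : ℝ, t₀ ≤ t → (t : EReal) < Tinf → |u t| ≤ U := by
  have ht₀_pos : 0 < t₀ := one_pos.trans_le ht₀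
  set K := ∫ t in Ici t₀, t * a t
  have hK_nonneg : 0 ≤ K := setIntegral_nonneg measurableSet_Ici fun t ht =>
    mul_nonneg (ht₀_pos.le.trans ht) (ha_nonneg t ht)
  have hM_le : (K + |u t₀| / g 1) / t₀ ≤ 4 / t₀ * (K + (1 + u t₀ ^ 2 / 2) / g 1) := by
    have hg₁ := hg_pos 1 one_pos
    have hu₀ : |u t₀| ≤ 1 + u t₀ ^ 2 / 2 := by
      nlinarith [sq_abs (u t₀), sq_nonneg (|u t₀| - 1)]
    rw [div_mul_eq_mul_div]
    gcongr
    nlinarith [div_le_div_of_nonneg_right hu₀ hg₁.le, div_nonneg (abs_nonneg (u t₀)) hg₁.le]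
  obtain ⟨Z, hZ₀, hZ⟩ : ∃ Z, 1 + |v t₀| ≤ Z ∧
      (K + |u t₀| / g 1) / t₀ < ∫ y in (1 + |v t₀|)..Z, 1 / g y :=
    exists_lt_intervalIntegral_of_lt_integral_Ici
      (hg_int.mono_set (Ici_subset_Ici.2 (le_add_of_nonneg_right (abs_nonneg _))))
      (hM_le.trans_lt hinit)
  refine ⟨|u t₀| + K * g Z, fun T hT₀ hT => ?_⟩
  have hlt : ∀ t ∈ Icc t₀ T, (t : EReal) < Tinf := fun t ht =>
    (EReal.coe_le_coe_iff.2 ht.2).trans_lt hT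
  have hu' : ∀ t ∈ Icc t₀ T, HasDerivAt u (-(t * f t (v t))) t := fun t ht =>
    hu t ht.1 (hlt t ht)
  have hv' : ∀ t ∈ Icc t₀ T, HasDerivAt v (u t / t ^ 2) t := fun t ht => hv t ht.1 (hlt t ht)
  have hT_mem : T ∈ Icc t₀ T := ⟨hT₀, le_rfl⟩
  have hzZ := comparison_le_of_lt_integral ht₀_pos hT₀ ha_nonneg
    (hg_cont.mono Ioi_subset_Ici_self) hg_pos hg_mono hfg hK hu' hv' hZ₀ hZ
  have hz_nonneg := zero_le_one.trans <| one_le_comparison (v := v) ht₀_pos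
    (fun t ht => (hu' t ht).continuousAt.continuousWithinAt) hT_mem
  calc |u T| ≤ |u t₀| + K * g (comparison t₀ u v T) :=
        abs_le_add_mul_comparison ht₀_pos ha_nonneg hg_pos hg_mono hfg hK hu' hv' hT_mem
    _ ≤ |u t₀| + K * g Z := by
        gcongr
        exact hg_mono hz_nonneg (hz_nonneg.trans hzZ) hzZ

/-- Main boundedness step: under the hypotheses of Theorem 1 (`f` continuous with
continuous `∂f/∂v`, `v·f(t,v) ≤ 0`, `∂f/∂v ≤ 0`, `|f(t,v)| ≤ a(t)g(|v|)` with `a ≥ 0`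
continuous, `g` continuous, nonnegative, nondecreasing, positive on `(0,∞)`,
`K = ∫_{t₀}^{∞} t a(t) dt < ∞`, `∫_1^{∞} dξ/g(ξ) < ∞`), every solution `(u, v)` of the
system `u′ = −t f(t,v)`, `v′ = u/t²` whose initial data satisfy
`(4/t₀)(K + c/g(1)) < ∫_{1+|v(t₀)|}^{∞} dξ/g(ξ)` with `c = 1 + u(t₀)²/2` has `u` bounded
on its interval of existence `[t₀, T∞)`. -/
theorem u_bounded_via_first_lyapunov
    (t₀ : ℝ) (ht₀ : 1 ≤ t₀) (f fv : ℝ → ℝ → ℝ)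
    (hf_cont : ContinuousOn (fun p : ℝ × ℝ => f p.1 p.2) (Set.Ici t₀ ×ˢ Set.univ))
    (hfv : ∀ t ∈ Set.Ici t₀, ∀ w : ℝ, HasDerivAt (f t) (fv t w) w)
    (hfv_cont : ContinuousOn (fun p : ℝ × ℝ => fv p.1 p.2) (Set.Ici t₀ ×ˢ Set.univ))
    (hsign : ∀ t ∈ Set.Ici t₀, ∀ w : ℝ, w * f t w ≤ 0)
    (hfv_nonpos : ∀ t ∈ Set.Ici t₀, ∀ w : ℝ, fv t w ≤ 0)
    (a g : ℝ → ℝ)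
    (ha_cont : ContinuousOn a (Set.Ici t₀))
    (ha_nonneg : ∀ t ∈ Set.Ici t₀, 0 ≤ a t)
    (hg_cont : ContinuousOn g (Set.Ici 0))
    (hg_nonneg : ∀ s ∈ Set.Ici (0 : ℝ), 0 ≤ g s)
    (hg_pos : ∀ s : ℝ, 0 < s → 0 < g s)
    (hg_mono : MonotoneOn g (Set.Ici 0))
    (hfg : ∀ t ∈ Set.Ici t₀, ∀ w : ℝ, |f t w| ≤ a t * g |w|)
    (hK : IntegrableOn (fun t => t * a t) (Set.Ici t₀))
    (hg_int : IntegrableOn (fun ξ => 1 / g ξ) (Set.Ici (1 : ℝ)))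
    (Tinf : EReal) (hT : (t₀ : EReal) < Tinf)
    (u v : ℝ → ℝ)
    (hu : ∀ t : ℝ, t₀ ≤ t → (t : EReal) < Tinf → HasDerivAt u (-(t * f t (v t))) t)
    (hv : ∀ t : ℝ, t₀ ≤ t → (t : EReal) < Tinf → HasDerivAt v (u t / t ^ 2) t)
    (hinit : 4 / t₀ * ((∫ t in Set.Ici t₀, t * a t) + (1 + u t₀ ^ 2 / 2) / g 1) <
      ∫ ξ in Set.Ici (1 + |v t₀|), 1 / g ξ) :
    ∃ U : ℝ, ∀ t : ℝ, t₀ ≤ t → (t : EReal) < Tinf → |u t| ≤ U :=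
  u_bounded_via_first_lyapunov_general t₀ ht₀ f a g ha_nonneg hg_cont hg_pos hg_mono hfg hK hg_int
    Tinf u v hu hv hinit
end

section
/- Let z : [t₀,∞) → [1,∞) (t₀ ≥ 1) be a C¹ nondecreasing function satisfying z′(t) ≤ (4/t²)·[K·g(z(t)) + c] for all t ≥ t₀, where K, c > 0 and g : [0,∞) → [0,∞) is continuous, nondecreasing and positive on (0,∞). If (4/t₀)·(K + c/g(1)) < ∫_{z(t₀)}^{∞} dξ/g(ξ), then z is bounded on [t₀,∞); more precisely ∫_{z(t₀)}^{z(t)} dξ/g(ξ) ≤ (4/t₀)·(K + c/g(1)) for all t ≥ t₀. -/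
open Filter Set MeasureTheory

/-!
Put `Φ(y) = ∫_{z(t₀)}^{y} dξ/g(ξ)`. Since `g(z) ≥ g(1)`, the differential inequality gives
`(Φ ∘ z)′ = z′/g(z) ≤ (4/t²)(K + c/g(1))`, whose right-hand side is the derivative of
`-(4/t)(K + c/g(1))`; comparing right derivatives on `[t₀, t]` yields
`Φ(z(t)) ≤ (4/t₀)(K + c/g(1))`. Since `Φ(y)` tends to `∫_{z(t₀)}^{∞} dξ/g(ξ)`, which exceeds that
bound, `z(t)` cannot become large.
-/

theorem hasDerivWithinAt_intervalIntegral_comp {φ z : ℝ → ℝ} {s : Set ℝ} {m y₀ z' t : ℝ}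
    (hφ : ContinuousOn φ (Ioi m)) (hy₀ : m < y₀) (hzt : m < z t)
    (hz : HasDerivWithinAt z z' s t) :
    HasDerivWithinAt (fun t ↦ ∫ y in y₀..z t, φ y) (φ (z t) * z') s t := by
  have hint : IntervalIntegrable φ volume y₀ (z t) :=
    (hφ.mono fun y hy ↦ lt_of_lt_of_le (lt_min hy₀ hzt) hy.1).intervalIntegrable
  have hderiv : HasDerivAt (fun y ↦ ∫ ξ in y₀..y, φ ξ) (φ (z t)) (z t) :=
    intervalIntegral.integral_hasDerivAt_right hint
      (hφ.stronglyMeasurableAtFilter isOpen_Ioi _ hzt) (hφ.continuousAt (Ioi_mem_nhds hzt))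
  exact hderiv.comp_hasDerivWithinAt t hz

theorem intervalIntegral_comp_le_sub {φ z z' H H' : ℝ → ℝ} {m t₀ : ℝ}
    (hφ : ContinuousOn φ (Ioi m)) (hz_gt : ∀ t ∈ Ici t₀, m < z t)
    (hz : ∀ t ∈ Ici t₀, HasDerivWithinAt z (z' t) (Ici t₀) t)
    (hH : ∀ t ∈ Ici t₀, HasDerivWithinAt H (H' t) (Ici t₀) t)
    (hbound : ∀ t ∈ Ici t₀, φ (z t) * z' t ≤ H' t) :
    ∀ t ∈ Ici t₀, ∫ y in z t₀..z t, φ y ≤ H t - H t₀ := by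
  have hΦ : ∀ t ∈ Ici t₀, HasDerivWithinAt (fun t ↦ ∫ y in z t₀..z t, φ y)
      (φ (z t) * z' t) (Ici t₀) t := fun t ht ↦
    hasDerivWithinAt_intervalIntegral_comp hφ (hz_gt t₀ self_mem_Ici) (hz_gt t ht) (hz t ht)
  have hsub : ∀ t ∈ Ici t₀, Ici t ⊆ Ici t₀ := fun t ht ↦ Ici_subset_Ici.mpr ht
  intro t ht
  refine image_le_of_deriv_right_le_deriv_boundary (B := fun t ↦ H t - H t₀)
    (fun s hs ↦ (hΦ s hs.1).continuousWithinAt.mono Icc_subset_Ici_self)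
    (fun s hs ↦ (hΦ s hs.1).mono (hsub s hs.1)) (by simp)
    (fun s hs ↦ ((hH s hs.1).continuousWithinAt.sub continuousWithinAt_const).mono
      Icc_subset_Ici_self)
    (fun s hs ↦ ((hH s hs.1).sub_const (H t₀)).mono (hsub s hs.1))
    (fun s hs ↦ hbound s hs.1) ⟨ht, le_rfl⟩

theorem intervalIntegral_comp_le_div_of_le_div_sq {φ z z' : ℝ → ℝ} {m t₀ A : ℝ}
    (ht₀ : 0 < t₀) (hA : 0 ≤ A) (hφ : ContinuousOn φ (Ioi m)) (hz_gt : ∀ t ∈ Ici t₀, m < z t)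
    (hz : ∀ t ∈ Ici t₀, HasDerivWithinAt z (z' t) (Ici t₀) t)
    (hbound : ∀ t ∈ Ici t₀, φ (z t) * z' t ≤ A / t ^ 2) :
    ∀ t ∈ Ici t₀, ∫ y in z t₀..z t, φ y ≤ A / t₀ := by
  have hpos : ∀ t ∈ Ici t₀, 0 < t := fun t ht ↦ ht₀.trans_le ht
  have hH : ∀ t ∈ Ici t₀, HasDerivWithinAt (fun t ↦ -A / t) (A / t ^ 2) (Ici t₀) t :=
    fun t ht ↦ ((hasDerivAt_inv (hpos t ht).ne').const_mul (-A)).hasDerivWithinAt.congr_deriv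
      (by ring)
  intro t ht
  calc ∫ y in z t₀..z t, φ y ≤ -A / t - -A / t₀ :=
        intervalIntegral_comp_le_sub hφ hz_gt hz hH hbound t ht
    _ ≤ A / t₀ := by
        have : 0 ≤ A / t := div_nonneg hA (hpos t ht).le
        linarith [neg_div t A, neg_div t₀ A]

theorem one_div_mul_le_mul_add_div {G g₁ K c a w : ℝ} (hg₁ : 0 < g₁) (hG : g₁ ≤ G)
    (hc : 0 ≤ c) (ha : 0 ≤ a) (hw : w ≤ a * (K * G + c)) :
    1 / G * w ≤ a * (K + c / g₁) := by
  have hG_pos : 0 < G := hg₁.trans_le hG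
  calc 1 / G * w ≤ 1 / G * (a * (K * G + c)) := by gcongr
    _ = a * (K + c / G) := by field_simp
    _ ≤ a * (K + c / g₁) := by gcongr

theorem exists_forall_lt_intervalIntegral_of_lt_integral_Ici {f : ℝ → ℝ} {a B : ℝ}
    (hf : IntegrableOn f (Ici a)) (hB : B < ∫ x in Ici a, f x) :
    ∃ M, ∀ x ≥ M, B < ∫ y in a..x, f y := by
  rw [integral_Ici_eq_integral_Ioi] at hB
  exact eventually_atTop.mp <| (intervalIntegral_tendsto_integral_Ioi a
    (hf.mono_set Ioi_subset_Ici_self) tendsto_id).eventually (eventually_gt_nhds hB)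

theorem bihari_type_comparison_general
    (t₀ : ℝ) (ht₀ : 1 ≤ t₀) (K c : ℝ) (hK : 0 < K) (hc : 0 < c)
    (g : ℝ → ℝ)
    (hg_cont : ContinuousOn g (Set.Ici 0))
    (hg_pos : ∀ s : ℝ, 0 < s → 0 < g s)
    (hg_mono : MonotoneOn g (Set.Ici 0))
    (z z' : ℝ → ℝ)
    (hz : ∀ t ∈ Set.Ici t₀, HasDerivWithinAt z (z' t) (Set.Ici t₀) t)
    (hz_ge : ∀ t ∈ Set.Ici t₀, 1 ≤ z t)
    (hz' : ∀ t ∈ Set.Ici t₀, z' t ≤ 4 / t ^ 2 * (K * g (z t) + c))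
    (hinit : 4 / t₀ * (K + c / g 1) < ∫ ξ in Set.Ici (z t₀), 1 / g ξ) :
    (∀ t ∈ Set.Ici t₀, (∫ ξ in (z t₀)..(z t), 1 / g ξ) ≤ 4 / t₀ * (K + c / g 1)) ∧
      ∃ M : ℝ, ∀ t ∈ Set.Ici t₀, z t ≤ M := by
  have hg1 : 0 < g 1 := hg_pos 1 one_pos
  have hφ : ContinuousOn (fun ξ ↦ 1 / g ξ) (Ioi 0) :=
    continuousOn_const.div (hg_cont.mono Ioi_subset_Ici_self) fun ξ hξ ↦ (hg_pos ξ hξ).ne'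
  have hbound : ∀ t ∈ Ici t₀, 1 / g (z t) * z' t ≤ 4 * (K + c / g 1) / t ^ 2 := fun t ht ↦
    (one_div_mul_le_mul_add_div hg1
      (hg_mono (mem_Ici.mpr zero_le_one) (zero_le_one.trans (hz_ge t ht)) (hz_ge t ht)) hc.le
      (by positivity) (hz' t ht)).trans_eq (by ring)
  have key : ∀ t ∈ Ici t₀, ∫ ξ in z t₀..z t, 1 / g ξ ≤ 4 / t₀ * (K + c / g 1) := fun t ht ↦
    (intervalIntegral_comp_le_div_of_le_div_sq (by positivity) (by positivity) hφ
      (fun s hs ↦ zero_lt_one.trans_le (hz_ge s hs)) hz hbound t ht).trans_eq (by ring)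
  have hint : IntegrableOn (fun ξ ↦ 1 / g ξ) (Ici (z t₀)) :=
    Integrable.of_integral_ne_zero ((lt_of_le_of_lt (by positivity) hinit).ne')
  obtain ⟨M, hM⟩ := exists_forall_lt_intervalIntegral_of_lt_integral_Ici hint hinit
  refine ⟨key, M, fun t ht ↦ ?_⟩
  by_contra! h
  exact (key t ht).not_gt (hM _ h.le)

/-- Bihari-type comparison estimate: if `z : [t₀,∞) → [1,∞)` is `C¹`, nondecreasing and
satisfies `z′(t) ≤ (4/t²)[K g(z(t)) + c]` with `K, c > 0` and `g` continuous,
nondecreasing, nonnegative and positive on `(0,∞)`, and if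
`(4/t₀)(K + c/g(1)) < ∫_{z(t₀)}^{∞} dξ/g(ξ)`, then
`∫_{z(t₀)}^{z(t)} dξ/g(ξ) ≤ (4/t₀)(K + c/g(1))` for all `t ≥ t₀` and `z` is bounded. -/
theorem bihari_type_comparison
    (t₀ : ℝ) (ht₀ : 1 ≤ t₀) (K c : ℝ) (hK : 0 < K) (hc : 0 < c)
    (g : ℝ → ℝ)
    (hg_cont : ContinuousOn g (Set.Ici 0))
    (hg_nonneg : ∀ s ∈ Set.Ici (0 : ℝ), 0 ≤ g s)
    (hg_pos : ∀ s : ℝ, 0 < s → 0 < g s)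
    (hg_mono : MonotoneOn g (Set.Ici 0))
    (z z' : ℝ → ℝ)
    (hz : ∀ t ∈ Set.Ici t₀, HasDerivWithinAt z (z' t) (Set.Ici t₀) t)
    (hz'_cont : ContinuousOn z' (Set.Ici t₀))
    (hz_ge : ∀ t ∈ Set.Ici t₀, 1 ≤ z t)
    (hz_mono : MonotoneOn z (Set.Ici t₀))
    (hz' : ∀ t ∈ Set.Ici t₀, z' t ≤ 4 / t ^ 2 * (K * g (z t) + c))
    (hinit : 4 / t₀ * (K + c / g 1) < ∫ ξ in Set.Ici (z t₀), 1 / g ξ) :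
    (∀ t ∈ Set.Ici t₀, (∫ ξ in (z t₀)..(z t), 1 / g ξ) ≤ 4 / t₀ * (K + c / g 1)) ∧
      ∃ M : ℝ, ∀ t ∈ Set.Ici t₀, z t ≤ M :=
  bihari_type_comparison_general t₀ ht₀ K c hK hc g hg_cont hg_pos hg_mono z z' hz hz_ge hz' hinit
end

section
/- Let n ≥ 2 be an integer and define A : [1,∞) → ℝ by A(t) = −4n(2n−2)^{−2} for t ∈ [1,2], A(t) = −2n(2n−2)^{−2}(4−t) for t ∈ [2,4], and A(t) = 0 for t ≥ 4. Then the function x(t) = (2−t)^{−1/(n−1)}, defined on [1,2), satisfies x″(t) + A(t)·x(t)^{2n−1} = 0 for all t ∈ [1,2), and x(t) → +∞ as t → 2⁻; i.e. the Emden–Fowler equation x″ + A(t)x^{2n−1} = 0 possesses a solution that blows up in finite time. -/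
/-! With `α = -1/(n-1)` one has `α (2n-1) = α - 2`, so both `x″` and `x^{2n-1}` for
`x(t) = (2-t)^α` are multiples of `(2-t)^{α-2}`; the ratio of the two coefficients is
`α(α-1) = n/(n-1)² = 4n/(2n-2)²`, which is exactly `-A` on `[1,2]`.
Blow-up at `t = 2` is `α < 0`. -/

open Filter Set Topology

section ConstSubRpow

variable (c p : ℝ) {t : ℝ}

lemma hasDerivAt_const_sub_rpow (ht : t < c) :
    HasDerivAt (fun s : ℝ => (c - s) ^ p) (-p * (c - t) ^ (p - 1)) t := by
  simpa [mul_comm] using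
    ((hasDerivAt_id t).const_sub c).rpow_const (p := p) (Or.inl (sub_pos.2 ht).ne')

lemma hasDerivAt_neg_mul_const_sub_rpow_sub_one (ht : t < c) :
    HasDerivAt (fun s : ℝ => -p * (c - s) ^ (p - 1)) (p * (p - 1) * (c - t) ^ (p - 2)) t :=
  ((hasDerivAt_const_sub_rpow c (p - 1) ht).const_mul (-p)).congr_deriv <| by
    rw [sub_sub, one_add_one_eq_two]
    ring

lemma tendsto_const_sub_nhdsLT : Tendsto (fun t : ℝ => c - t) (𝓝[<] c) (𝓝[>] 0) :=
  tendsto_nhdsWithin_of_tendsto_nhds_of_eventually_within _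
    (((continuous_sub_left c).tendsto' c 0 (sub_self c)).mono_left nhdsWithin_le_nhds)
    (eventually_nhdsWithin_of_forall fun _ ht => sub_pos.2 (mem_Iio.1 ht))

lemma tendsto_const_sub_rpow_nhdsLT_atTop {p : ℝ} (hp : p < 0) :
    Tendsto (fun t : ℝ => (c - t) ^ p) (𝓝[<] c) atTop :=
  (tendsto_rpow_neg_nhdsGT_zero hp).comp (tendsto_const_sub_nhdsLT c)

end ConstSubRpow

section EmdenFowlerExponent

variable {n : ℕ} (hn : 2 ≤ n)
include hn

lemma neg_one_div_sub_one_neg : -(1 : ℝ) / ((n : ℝ) - 1) < 0 := by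
  have : (2 : ℝ) ≤ n := by exact_mod_cast hn
  exact div_neg_of_neg_of_pos (by norm_num) (by linarith)

lemma rpow_neg_one_div_sub_one_pow {y : ℝ} (hy : 0 ≤ y) :
    (y ^ (-(1 : ℝ) / ((n : ℝ) - 1))) ^ (2 * n - 1) =
      y ^ (-(1 : ℝ) / ((n : ℝ) - 1) - 2) := by
  have : (2 : ℝ) ≤ n := by exact_mod_cast hn
  have : (n : ℝ) - 1 ≠ 0 := by linarith
  rw [← Real.rpow_mul_natCast hy, Nat.cast_sub (by omega)]
  congr 1
  push_cast
  field_simp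
  ring

lemma neg_one_div_sub_one_mul_sub_one :
    (-(1 : ℝ) / ((n : ℝ) - 1)) * (-(1 : ℝ) / ((n : ℝ) - 1) - 1) =
      4 * n / (2 * n - 2) ^ 2 := by
  have : (2 : ℝ) ≤ n := by exact_mod_cast hn
  have : (n : ℝ) - 1 ≠ 0 := by linarith
  have : (2 * n - 2 : ℝ) ≠ 0 := by linarith
  field_simp
  ring

end EmdenFowlerExponent

theorem emden_fowler_finite_time_blow_up_general
    (n : ℕ) (hn : 2 ≤ n) (A : ℝ → ℝ)
    (hA₁ : ∀ t ∈ Set.Icc (1 : ℝ) 2, A t = -(4 * n) / (2 * n - 2) ^ 2) :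
    ∃ x' x'' : ℝ → ℝ,
      (∀ t ∈ Set.Ico (1 : ℝ) 2,
        HasDerivAt (fun s : ℝ => (2 - s) ^ (-(1 : ℝ) / ((n : ℝ) - 1))) (x' t) t) ∧
      (∀ t ∈ Set.Ico (1 : ℝ) 2, HasDerivAt x' (x'' t) t) ∧
      (∀ t ∈ Set.Ico (1 : ℝ) 2,
        x'' t + A t * ((2 - t) ^ (-(1 : ℝ) / ((n : ℝ) - 1))) ^ (2 * n - 1) = 0) ∧
      Tendsto (fun t : ℝ => (2 - t) ^ (-(1 : ℝ) / ((n : ℝ) - 1)))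
        (nhdsWithin 2 (Set.Iio 2)) atTop := by
  set α : ℝ := -(1 : ℝ) / ((n : ℝ) - 1)
  refine ⟨fun t => -α * (2 - t) ^ (α - 1), fun t => α * (α - 1) * (2 - t) ^ (α - 2),
    fun t ht => hasDerivAt_const_sub_rpow 2 α ht.2,
    fun t ht => hasDerivAt_neg_mul_const_sub_rpow_sub_one 2 α ht.2, fun t ht => ?_,
    tendsto_const_sub_rpow_nhdsLT_atTop 2 (neg_one_div_sub_one_neg hn)⟩
  rw [hA₁ t (Ico_subset_Icc_self ht), rpow_neg_one_div_sub_one_pow hn (by linarith [ht.2]),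
    neg_one_div_sub_one_mul_sub_one hn]
  ring

/-- Finite-time blow-up example: for `n ≥ 2` and the piecewise coefficient
`A(t) = −4n(2n−2)^{−2}` on `[1,2]`, `A(t) = −2n(2n−2)^{−2}(4−t)` on `[2,4]`, `A(t) = 0`
for `t ≥ 4`, the function `x(t) = (2−t)^{−1/(n−1)}` solves `x″ + A(t)x^{2n−1} = 0` on
`[1,2)` and blows up (`x(t) → +∞`) as `t → 2⁻`. -/
theorem emden_fowler_finite_time_blow_up
    (n : ℕ) (hn : 2 ≤ n) (A : ℝ → ℝ)
    (hA₁ : ∀ t ∈ Set.Icc (1 : ℝ) 2, A t = -(4 * n) / (2 * n - 2) ^ 2)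
    (hA₂ : ∀ t ∈ Set.Icc (2 : ℝ) 4, A t = -(2 * n) / (2 * n - 2) ^ 2 * (4 - t))
    (hA₃ : ∀ t : ℝ, 4 ≤ t → A t = 0) :
    ∃ x' x'' : ℝ → ℝ,
      (∀ t ∈ Set.Ico (1 : ℝ) 2,
        HasDerivAt (fun s : ℝ => (2 - s) ^ (-(1 : ℝ) / ((n : ℝ) - 1))) (x' t) t) ∧
      (∀ t ∈ Set.Ico (1 : ℝ) 2, HasDerivAt x' (x'' t) t) ∧
      (∀ t ∈ Set.Ico (1 : ℝ) 2,
        x'' t + A t * ((2 - t) ^ (-(1 : ℝ) / ((n : ℝ) - 1))) ^ (2 * n - 1) = 0) ∧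
      Tendsto (fun t : ℝ => (2 - t) ^ (-(1 : ℝ) / ((n : ℝ) - 1)))
        (nhdsWithin 2 (Set.Iio 2)) atTop :=
  emden_fowler_finite_time_blow_up_general n hn A hA₁
end
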